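/- Let M = ⟨t₁, t₂, t₃, α⟩ with α = ½e₁ + diag(1,1,−1) (the torsion-free 3-space group of the flat manifold N³₁). Then the normalizer of M in the affinities of E³ equals {b + B : 2b₃ ∈ ℤ and B = diag(C, ±1) with C ∈ GL(2,ℤ) and c₂₁ ∈ 2ℤ}, and Out(M) ≅ (ℤ/2ℤ) × H where H = {C ∈ GL(2,ℤ) : c₂₁ ∈ 2ℤ}, with the class of the affinity ½e₃ + I mapping to the generator of the ℤ/2ℤ factor and the class of diag(C, ±1) mapping to C ∈ H. -/

import Mathlib

/-- Euclidean n-space, as `Fin n → ℝ`. -/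
abbrev Eu (n : ℕ) : Type := Fin n → ℝ

/-- An affinity `a + A` of Euclidean n-space: `x ↦ a + A x` with `A ∈ GL(n, ℝ)`. -/
@[ext] structure Aff (n : ℕ) where
  a : Eu n
  A : Matrix.GeneralLinearGroup (Fin n) ℝ

namespace Aff

variable {n : ℕ}

/-- The matrix (linear) part of an affinity. -/
def mat (φ : Aff n) : Matrix (Fin n) (Fin n) ℝ := φ.A

instance : Mul (Aff n) := ⟨fun φ ψ => ⟨φ.a + φ.mat.mulVec ψ.a, φ.A * ψ.A⟩⟩
instance : One (Aff n) := ⟨⟨0, 1⟩⟩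
instance : Inv (Aff n) :=
  ⟨fun φ => ⟨-(Matrix.mulVec ((φ.A⁻¹ : Matrix.GeneralLinearGroup (Fin n) ℝ) : Matrix (Fin n) (Fin n) ℝ) φ.a), φ.A⁻¹⟩⟩

@[simp] lemma mul_a (φ ψ : Aff n) : (φ * ψ).a = φ.a + φ.mat.mulVec ψ.a := rfl
@[simp] lemma mul_A (φ ψ : Aff n) : (φ * ψ).A = φ.A * ψ.A := rfl
@[simp] lemma one_a : (1 : Aff n).a = 0 := rfl
@[simp] lemma one_A : (1 : Aff n).A = 1 := rfl
@[simp] lemma inv_A (φ : Aff n) : (φ⁻¹).A = φ.A⁻¹ := rfl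
@[simp] lemma mat_mul (φ ψ : Aff n) : (φ * ψ).mat = φ.mat * ψ.mat := rfl
@[simp] lemma mat_one : (1 : Aff n).mat = 1 := rfl

instance : Group (Aff n) where
  mul_assoc φ ψ χ := by
    ext1
    · simp [Matrix.mulVec_add, ← Matrix.mulVec_mulVec, add_assoc]
    · exact mul_assoc _ _ _
  one_mul φ := by
    ext1
    · simp
    · exact one_mul _
  mul_one φ := by
    ext1
    · simp
    · exact mul_one _
  inv_mul_cancel φ := by
    ext1
    · show (φ⁻¹).a + (φ⁻¹).mat.mulVec φ.a = (0 : Eu n)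
      show -(Matrix.mulVec _ φ.a) + Matrix.mulVec _ φ.a = (0 : Eu n)
      exact neg_add_cancel _
    · exact inv_mul_cancel _

instance : SMul (Aff n) (Eu n) := ⟨fun φ x => φ.a + φ.mat.mulVec x⟩

lemma smul_def (φ : Aff n) (x : Eu n) : φ • x = φ.a + φ.mat.mulVec x := rfl

instance : MulAction (Aff n) (Eu n) where
  one_smul x := by
    show (0 : Eu n) + (1 : Aff n).mat.mulVec x = x
    simp
  mul_smul φ ψ x := by
    show (φ * ψ).a + (φ * ψ).mat.mulVec x = φ.a + φ.mat.mulVec (ψ.a + ψ.mat.mulVec x)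
    simp [Matrix.mulVec_add, ← Matrix.mulVec_mulVec, add_assoc]

/-- The translation `x ↦ v + x`, as an affinity. -/
def tr (v : Eu n) : Aff n := ⟨v, 1⟩

instance : TopologicalSpace (Aff n) :=
  TopologicalSpace.induced (fun φ => (φ.a, φ.mat)) inferInstance

end Aff

/-- A diagonal matrix with `±1` diagonal entries, as an element of `GL(n,ℝ)`. -/
noncomputable def glDiag {n : ℕ} (v : Fin n → ℝ) (h : v * v = 1) :
    Matrix.GeneralLinearGroup (Fin n) ℝ :=
  ⟨Matrix.diagonal v, Matrix.diagonal v,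
    by
      rw [Matrix.diagonal_mul_diagonal]
      rw [show (fun i => v i * v i) = (1 : Fin n → ℝ) from h]
      exact Matrix.diagonal_one,
    by
      rw [Matrix.diagonal_mul_diagonal]
      rw [show (fun i => v i * v i) = (1 : Fin n → ℝ) from h]
      exact Matrix.diagonal_one⟩

/-- The subgroup of inner automorphisms of `G`. -/
def Inn (G : Type*) [Group G] : Subgroup (MulAut G) :=
  (MulAut.conj (G := G)).range

instance innNormal (G : Type*) [Group G] : (Inn G).Normal := by
  constructor
  rintro f ⟨g, rfl⟩ φ
  refine ⟨φ g, ?_⟩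
  ext x
  simp [MulAut.conj_apply, map_mul, map_inv]

/-- The outer automorphism group `Out(G) = Aut(G)/Inn(G)`. -/
def Out (G : Type*) [Group G] := MulAut G ⧸ Inn G

noncomputable instance (G : Type*) [Group G] : Group (Out G) :=
  QuotientGroup.Quotient.group (Inn G)

/-- The class of an automorphism in `Out(G)`. -/
def outMk {G : Type*} [Group G] (f : MulAut G) : Out G := QuotientGroup.mk f

/-- The block-diagonal 3×3 matrix `diag(C, δ)` with upper-left 2×2 block `C` and
lower-right entry `δ`. -/
def blockMat (C : Matrix (Fin 2) (Fin 2) ℝ) (δ : ℝ) : Matrix (Fin 3) (Fin 3) ℝ :=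
  Matrix.of fun i j =>
    if hi : (i : ℕ) < 2 then
      (if hj : (j : ℕ) < 2 then C ⟨i, hi⟩ ⟨j, hj⟩ else 0)
    else
      (if (j : ℕ) < 2 then 0 else δ)

namespace N31

/-- `α = ½e₁ + diag(1,1,−1)`. -/
noncomputable def αg : Aff 3 :=
  ⟨Pi.single 0 (1/2 : ℝ), glDiag ![1, 1, -1] (by funext i; fin_cases i <;> norm_num)⟩

/-- The 3-space group `M = ⟨t₁, t₂, t₃, α⟩` of the flat 3-manifold `N³₁`. -/
noncomputable def M : Subgroup (Aff 3) :=
  Subgroup.closure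
    {Aff.tr (Pi.single 0 1), Aff.tr (Pi.single 1 1), Aff.tr (Pi.single 2 1), αg}

end N31


/-! ### Auxiliary development -/

namespace N31Aux

open N31 Aff Matrix

/-- The linear part of `αg`, as an element of `GL(3,ℝ)`. -/
noncomputable def Dg : Matrix.GeneralLinearGroup (Fin 3) ℝ := αg.A

lemma coe_Dg : (Dg : Matrix (Fin 3) (Fin 3) ℝ) = Matrix.diagonal ![1, 1, -1] := rfl

lemma Dg_inv : Dg⁻¹ = Dg := Units.ext rfl

lemma Dg_mul_Dg : Dg * Dg = 1 := by
  apply Units.ext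
  show (Dg : Matrix (Fin 3) (Fin 3) ℝ) * (Dg : Matrix (Fin 3) (Fin 3) ℝ) = 1
  rw [coe_Dg, Matrix.diagonal_mul_diagonal]
  have : (fun i => (![1,1,-1] : Fin 3 → ℝ) i * ![1,1,-1] i) = (1 : Fin 3 → ℝ) := by
    funext i; fin_cases i <;> norm_num
  rw [this]; exact Matrix.diagonal_one

lemma Dg_ne_one : Dg ≠ 1 := by
  intro h
  have h2 : (Dg : Matrix (Fin 3) (Fin 3) ℝ) 2 2 = (1 : Matrix (Fin 3) (Fin 3) ℝ) 2 2 := by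
    rw [h]; rfl
  rw [coe_Dg] at h2
  simp [Matrix.diagonal, Matrix.one_apply] at h2
  norm_num at h2

lemma Dg_mulVec (v : Eu 3) (i : Fin 3) :
    (Dg : Matrix (Fin 3) (Fin 3) ℝ).mulVec v i = ![1,1,-1] i * v i := by
  rw [coe_Dg]; exact Matrix.mulVec_diagonal _ _ _

/-- The translation vector of `αg`. -/
lemma αg_a : αg.a = Pi.single 0 (1/2 : ℝ) := rfl

lemma αg_A : αg.A = Dg := rfl

/-- an integer vector -/
def isZ (v : Eu 3) : Prop := ∀ i, ∃ z : ℤ, v i = z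

lemma isZ_add {v w : Eu 3} (hv : isZ v) (hw : isZ w) : isZ (v + w) := by
  intro i
  obtain ⟨z, hz⟩ := hv i; obtain ⟨y, hy⟩ := hw i
  exact ⟨z + y, by simp [hz, hy]⟩

lemma isZ_neg {v : Eu 3} (hv : isZ v) : isZ (-v) := by
  intro i; obtain ⟨z, hz⟩ := hv i; exact ⟨-z, by simp [hz]⟩

lemma isZ_sub {v w : Eu 3} (hv : isZ v) (hw : isZ w) : isZ (v - w) := by
  rw [sub_eq_add_neg]; exact isZ_add hv (isZ_neg hw)

lemma isZ_D {v : Eu 3} (hv : isZ v) : isZ ((Dg : Matrix (Fin 3) (Fin 3) ℝ).mulVec v) := by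
  intro i
  obtain ⟨z, hz⟩ := hv i
  rw [Dg_mulVec]
  have : (![1,1,-1] : Fin 3 → ℝ) i = 1 ∨ (![1,1,-1] : Fin 3 → ℝ) i = -1 := by
    fin_cases i <;> norm_num
  rcases this with h | h
  · exact ⟨z, by rw [h, hz]; ring⟩
  · exact ⟨-z, by rw [h, hz]; push_cast; ring⟩

lemma isZ_single (i : Fin 3) : isZ (Pi.single i (1:ℝ)) := by
  intro j
  by_cases h : j = i
  · subst h; exact ⟨1, by simp⟩
  · exact ⟨0, by simp [Pi.single_eq_of_ne h]⟩

lemma isZ_zero : isZ (0 : Eu 3) := fun i => ⟨0, by simp⟩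

/-- the subgroup that `M` will be shown to equal -/
noncomputable def M' : Subgroup (Aff 3) where
  carrier := {g | (g.A = 1 ∧ isZ g.a) ∨ (g.A = Dg ∧ isZ (g.a - αg.a))}
  one_mem' := Or.inl ⟨rfl, isZ_zero⟩
  mul_mem' := by
    rintro x y (⟨hA, ha⟩ | ⟨hA, ha⟩) (⟨hB, hb⟩ | ⟨hB, hb⟩)
    · exact Or.inl ⟨by simp [hA, hB], by
        have : (x * y).a = x.a + y.a := by
          simp [Aff.mul_a, Aff.mat, hA, Matrix.one_mulVec]
        rw [this]; exact isZ_add ha hb⟩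
    · refine Or.inr ⟨by simp [hA, hB], ?_⟩
      have : (x * y).a = x.a + y.a := by
        simp [Aff.mul_a, Aff.mat, hA, Matrix.one_mulVec]
      rw [this, add_sub_assoc]
      exact isZ_add ha hb
    · refine Or.inr ⟨by simp [hA, hB], ?_⟩
      have h1 : (x * y).a = x.a + (Dg : Matrix (Fin 3) (Fin 3) ℝ).mulVec y.a := by
        simp [Aff.mul_a, Aff.mat, hA]
      rw [h1]
      have key : x.a + (Dg : Matrix (Fin 3) (Fin 3) ℝ).mulVec y.a - αg.a
          = (x.a - αg.a) + (Dg : Matrix (Fin 3) (Fin 3) ℝ).mulVec y.a := by ring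
      rw [key]
      exact isZ_add ha (isZ_D hb)
    · refine Or.inl ⟨by rw [Aff.mul_A, hA, hB]; exact Dg_mul_Dg, ?_⟩
      have h1 : (x * y).a = x.a + (Dg : Matrix (Fin 3) (Fin 3) ℝ).mulVec y.a := by
        simp [Aff.mul_a, Aff.mat, hA]
      rw [h1]
      have key : x.a + (Dg : Matrix (Fin 3) (Fin 3) ℝ).mulVec y.a
          = (x.a - αg.a) + ((Dg : Matrix (Fin 3) (Fin 3) ℝ).mulVec (y.a - αg.a))
            + (αg.a + (Dg : Matrix (Fin 3) (Fin 3) ℝ).mulVec αg.a) := by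
        rw [Matrix.mulVec_sub]; ring
      have he : αg.a + (Dg : Matrix (Fin 3) (Fin 3) ℝ).mulVec αg.a = Pi.single 0 (1:ℝ) := by
        funext i
        have := Dg_mulVec αg.a i
        fin_cases i <;>
          simp_all [αg_a, Pi.single_apply] <;> norm_num
      rw [key, he]
      exact isZ_add (isZ_add ha (isZ_D hb)) (isZ_single 0)
  inv_mem' := by
    rintro x (⟨hA, ha⟩ | ⟨hA, ha⟩)
    · refine Or.inl ⟨by simp [hA], ?_⟩
      have : (x⁻¹).a = -x.a := by
        show -(Matrix.mulVec _ x.a) = -x.a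
        rw [show ((x.A⁻¹ : Matrix.GeneralLinearGroup (Fin 3) ℝ) : Matrix (Fin 3) (Fin 3) ℝ)
            = 1 by rw [hA]; rfl]
        rw [Matrix.one_mulVec]
      rw [this]; exact isZ_neg ha
    · refine Or.inr ⟨by rw [Aff.inv_A, hA, Dg_inv], ?_⟩
      have hcoe : ((x.A⁻¹ : Matrix.GeneralLinearGroup (Fin 3) ℝ) : Matrix (Fin 3) (Fin 3) ℝ)
          = (Dg : Matrix (Fin 3) (Fin 3) ℝ) := by rw [hA, Dg_inv]
      have h1 : (x⁻¹).a = -((Dg : Matrix (Fin 3) (Fin 3) ℝ).mulVec x.a) := by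
        show -(Matrix.mulVec _ x.a) = _
        rw [hcoe]
      rw [h1]
      have key : -((Dg : Matrix (Fin 3) (Fin 3) ℝ).mulVec x.a) - αg.a
          = -((Dg : Matrix (Fin 3) (Fin 3) ℝ).mulVec (x.a - αg.a))
            - ((Dg : Matrix (Fin 3) (Fin 3) ℝ).mulVec αg.a + αg.a) := by
        rw [Matrix.mulVec_sub]; ring
      have he : (Dg : Matrix (Fin 3) (Fin 3) ℝ).mulVec αg.a + αg.a = Pi.single 0 (1:ℝ) := by
        funext i
        have := Dg_mulVec αg.a i
        fin_cases i <;> simp_all [αg_a, Pi.single_apply] <;> norm_num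
      rw [key, he, sub_eq_add_neg]
      exact isZ_add (isZ_neg (isZ_D ha)) (isZ_neg (isZ_single 0))

end N31Aux

namespace N31Aux

open N31 Aff Matrix

lemma tr_mul_tr (v w : Eu 3) : Aff.tr v * Aff.tr w = Aff.tr (v + w) := by
  show (⟨v + Matrix.mulVec _ w, 1 * 1⟩ : Aff 3) = ⟨v + w, 1⟩
  congr 1
  · show v + ((1 : Matrix.GeneralLinearGroup (Fin 3) ℝ) : Matrix (Fin 3) (Fin 3) ℝ).mulVec w = v + w
    rw [show ((1 : Matrix.GeneralLinearGroup (Fin 3) ℝ) : Matrix (Fin 3) (Fin 3) ℝ) = 1 from rfl,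
      Matrix.one_mulVec]
  · exact one_mul 1

/-- `tr` as a monoid hom from the additive group of vectors. -/
noncomputable def trHom : Multiplicative (Eu 3) →* Aff 3 :=
  MonoidHom.mk' (fun v => Aff.tr v.toAdd) (fun a b => by
    rw [tr_mul_tr]; rfl)

lemma tr_zpow (v : Eu 3) (z : ℤ) : (Aff.tr v) ^ z = Aff.tr (z • v) := by
  have := map_zpow trHom (Multiplicative.ofAdd v) z
  simpa [trHom, MonoidHom.mk'] using this.symm

lemma tr_a (v : Eu 3) : (Aff.tr v).a = v := rfl
lemma tr_A (v : Eu 3) : (Aff.tr v).A = 1 := rfl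

lemma M_eq_M' : M = M' := by
  apply le_antisymm
  · rw [N31.M, Subgroup.closure_le]
    rintro x (rfl | rfl | rfl | rfl)
    · exact Or.inl ⟨rfl, isZ_single 0⟩
    · exact Or.inl ⟨rfl, isZ_single 1⟩
    · exact Or.inl ⟨rfl, isZ_single 2⟩
    · exact Or.inr ⟨rfl, by rw [αg_a, sub_self]; exact isZ_zero⟩
  · intro g hg
    have tr_mem : ∀ v : Eu 3, isZ v → Aff.tr v ∈ M := by
      intro v hv
      obtain ⟨z0, h0⟩ := hv 0
      obtain ⟨z1, h1⟩ := hv 1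
      obtain ⟨z2, h2⟩ := hv 2
      have hv' : v = z0 • (Pi.single 0 (1:ℝ)) + z1 • (Pi.single 1 (1:ℝ))
          + z2 • (Pi.single 2 (1:ℝ)) := by
        funext i
        fin_cases i <;> simp_all [Pi.single_apply]
      have : Aff.tr v = (Aff.tr (Pi.single 0 1)) ^ z0 * (Aff.tr (Pi.single 1 1)) ^ z1
          * (Aff.tr (Pi.single 2 1)) ^ z2 := by
        rw [tr_zpow, tr_zpow, tr_zpow, tr_mul_tr, tr_mul_tr, hv']
      rw [this]
      exact mul_mem (mul_mem
        (zpow_mem (Subgroup.subset_closure (by simp)) _)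
        (zpow_mem (Subgroup.subset_closure (by simp)) _))
        (zpow_mem (Subgroup.subset_closure (by simp)) _)
    rcases hg with ⟨hA, ha⟩ | ⟨hA, ha⟩
    · have : g = Aff.tr g.a := by
        cases g; simp_all [Aff.tr]
      rw [this]; exact tr_mem _ ha
    · have : g = Aff.tr (g.a - αg.a) * αg := by
        cases g with
        | mk a A =>
          show _ = (⟨(a - αg.a) + Matrix.mulVec _ αg.a, 1 * αg.A⟩ : Aff 3)
          congr 1
          · show a = (a - αg.a) +
              ((1 : Matrix.GeneralLinearGroup (Fin 3) ℝ) : Matrix (Fin 3) (Fin 3) ℝ).mulVec αg.a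
            rw [show ((1 : Matrix.GeneralLinearGroup (Fin 3) ℝ) : Matrix (Fin 3) (Fin 3) ℝ)
              = 1 from rfl, Matrix.one_mulVec]
            ring
          · rw [one_mul]; exact hA
      rw [this]
      exact mul_mem (tr_mem _ ha) (Subgroup.subset_closure (by simp))

lemma mem_M_iff (g : Aff 3) :
    g ∈ M ↔ (g.A = 1 ∧ isZ g.a) ∨ (g.A = Dg ∧ isZ (g.a - αg.a)) := by
  rw [M_eq_M']; rfl

end N31Aux

namespace N31Aux

open N31 Aff Matrix

lemma blockMat_apply_00 (C : Matrix (Fin 2) (Fin 2) ℝ) (δ : ℝ) : blockMat C δ 0 0 = C 0 0 := rfl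
lemma blockMat_apply_01 (C : Matrix (Fin 2) (Fin 2) ℝ) (δ : ℝ) : blockMat C δ 0 1 = C 0 1 := rfl
lemma blockMat_apply_10 (C : Matrix (Fin 2) (Fin 2) ℝ) (δ : ℝ) : blockMat C δ 1 0 = C 1 0 := rfl
lemma blockMat_apply_11 (C : Matrix (Fin 2) (Fin 2) ℝ) (δ : ℝ) : blockMat C δ 1 1 = C 1 1 := rfl
lemma blockMat_apply_02 (C : Matrix (Fin 2) (Fin 2) ℝ) (δ : ℝ) : blockMat C δ 0 2 = 0 := rfl
lemma blockMat_apply_12 (C : Matrix (Fin 2) (Fin 2) ℝ) (δ : ℝ) : blockMat C δ 1 2 = 0 := rfl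
lemma blockMat_apply_20 (C : Matrix (Fin 2) (Fin 2) ℝ) (δ : ℝ) : blockMat C δ 2 0 = 0 := rfl
lemma blockMat_apply_21 (C : Matrix (Fin 2) (Fin 2) ℝ) (δ : ℝ) : blockMat C δ 2 1 = 0 := rfl
lemma blockMat_apply_22 (C : Matrix (Fin 2) (Fin 2) ℝ) (δ : ℝ) : blockMat C δ 2 2 = δ := rfl

lemma blockMat_mul (C C' : Matrix (Fin 2) (Fin 2) ℝ) (δ δ' : ℝ) :
    blockMat C δ * blockMat C' δ' = blockMat (C * C') (δ * δ') := by
  ext i j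
  fin_cases i <;> fin_cases j <;>
    simp [Matrix.mul_apply, Fin.sum_univ_three, Fin.sum_univ_two,
      blockMat_apply_00, blockMat_apply_01, blockMat_apply_10, blockMat_apply_11,
      blockMat_apply_02, blockMat_apply_12, blockMat_apply_20, blockMat_apply_21,
      blockMat_apply_22, blockMat]

lemma blockMat_one : blockMat (1 : Matrix (Fin 2) (Fin 2) ℝ) 1 = 1 := by
  ext i j
  fin_cases i <;> fin_cases j <;>
    simp [blockMat, Matrix.one_apply]

lemma Dg_eq_blockMat : (Dg : Matrix (Fin 3) (Fin 3) ℝ) = blockMat 1 (-1) := by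
  rw [coe_Dg]
  ext i j
  fin_cases i <;> fin_cases j <;>
    simp [blockMat, Matrix.diagonal, Matrix.one_apply]

lemma blockMat_comm_Dg (C : Matrix (Fin 2) (Fin 2) ℝ) (δ : ℝ) :
    blockMat C δ * (Dg : Matrix (Fin 3) (Fin 3) ℝ)
      = (Dg : Matrix (Fin 3) (Fin 3) ℝ) * blockMat C δ := by
  rw [Dg_eq_blockMat, blockMat_mul, blockMat_mul, mul_one, one_mul, mul_comm δ (-1)]

lemma blockMat_mulVec (C : Matrix (Fin 2) (Fin 2) ℝ) (δ : ℝ) (v : Eu 3) :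
    (blockMat C δ).mulVec v
      = ![C 0 0 * v 0 + C 0 1 * v 1, C 1 0 * v 0 + C 1 1 * v 1, δ * v 2] := by
  funext i
  fin_cases i <;>
    simp [Matrix.mulVec, dotProduct, Fin.sum_univ_three, blockMat]

/-- coercion of a `GL` inverse, given an explicit two-sided matrix inverse -/
lemma gl_inv_coe {u : Matrix.GeneralLinearGroup (Fin 3) ℝ} {Y : Matrix (Fin 3) (Fin 3) ℝ}
    (h1 : (u : Matrix (Fin 3) (Fin 3) ℝ) * Y = 1) :
    ((u⁻¹ : Matrix.GeneralLinearGroup (Fin 3) ℝ) : Matrix (Fin 3) (Fin 3) ℝ) = Y := by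
  have hu : ((u⁻¹ : Matrix.GeneralLinearGroup (Fin 3) ℝ) : Matrix (Fin 3) (Fin 3) ℝ)
      * (u : Matrix (Fin 3) (Fin 3) ℝ) = 1 := by
    rw [← Units.val_mul, inv_mul_cancel u, Units.val_one]
  calc ((u⁻¹ : Matrix.GeneralLinearGroup (Fin 3) ℝ) : Matrix (Fin 3) (Fin 3) ℝ)
      = ((u⁻¹ : Matrix.GeneralLinearGroup (Fin 3) ℝ) : Matrix (Fin 3) (Fin 3) ℝ)
        * ((u : Matrix (Fin 3) (Fin 3) ℝ) * Y) := by rw [h1, mul_one]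
    _ = Y := by rw [← mul_assoc, hu, one_mul]

/-- the general conjugation formula in `Aff 3` -/
lemma conj_eq (φ g : Aff 3) :
    φ * g * φ⁻¹ = ⟨φ.a + φ.mat.mulVec g.a
        - (((φ.A * g.A * φ.A⁻¹ : Matrix.GeneralLinearGroup (Fin 3) ℝ))
            : Matrix (Fin 3) (Fin 3) ℝ).mulVec φ.a,
      φ.A * g.A * φ.A⁻¹⟩ := by
  have hinva : (φ⁻¹).a = -(((φ.A⁻¹ : Matrix.GeneralLinearGroup (Fin 3) ℝ)
      : Matrix (Fin 3) (Fin 3) ℝ).mulVec φ.a) := rfl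
  ext1
  · show (φ * g).a + (φ * g).mat.mulVec (φ⁻¹).a = _
    rw [hinva, Aff.mul_a]
    show φ.a + φ.mat.mulVec g.a +
        (((φ.A * g.A : Matrix.GeneralLinearGroup (Fin 3) ℝ)) :
          Matrix (Fin 3) (Fin 3) ℝ).mulVec _ = _
    rw [Matrix.mulVec_neg, Matrix.mulVec_mulVec, ← Units.val_mul, ← sub_eq_add_neg]
  · show φ.A * g.A * φ.A⁻¹ = _
    rfl

lemma conj_tr (φ : Aff 3) (v : Eu 3) :
    φ * Aff.tr v * φ⁻¹ = Aff.tr (φ.mat.mulVec v) := by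
  rw [conj_eq]
  show (⟨_, _⟩ : Aff 3) = ⟨_, 1⟩
  rw [tr_A]
  congr 1
  · rw [mul_one, mul_inv_cancel]
    show φ.a + φ.mat.mulVec (Aff.tr v).a
        - ((1 : Matrix (Fin 3) (Fin 3) ℝ)).mulVec φ.a = φ.mat.mulVec v
    rw [Matrix.one_mulVec, tr_a]
    ring
  · rw [mul_one, mul_inv_cancel]

end N31Aux

namespace N31Aux

open N31 Aff Matrix

/-- the normalizer condition -/
def normCond (φ : Aff 3) : Prop :=
  (∃ z : ℤ, 2 * φ.a 2 = (z : ℝ)) ∧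
    ∃ C : Matrix (Fin 2) (Fin 2) ℤ, IsUnit C.det ∧ (2 : ℤ) ∣ C 1 0 ∧
      ∃ δ : ℝ, (δ = 1 ∨ δ = -1) ∧
        Aff.mat φ = blockMat (C.map (fun z : ℤ => (z : ℝ))) δ

lemma C00_odd {C : Matrix (Fin 2) (Fin 2) ℤ} (hu : IsUnit C.det) (he : (2:ℤ) ∣ C 1 0) :
    ∃ m : ℤ, C 0 0 = 2 * m + 1 := by
  rw [Matrix.det_fin_two] at hu
  obtain ⟨k, hk⟩ := he
  have hodd : Odd (C 0 0 * C 1 1) := by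
    rcases Int.isUnit_iff.mp hu with h | h
    · exact ⟨C 0 1 * k, by rw [hk] at h; linarith⟩
    · exact ⟨C 0 1 * k - 1, by rw [hk] at h; linarith⟩
  obtain ⟨m, hm⟩ := (Int.odd_mul.mp hodd).1
  exact ⟨m, by linarith⟩

lemma isZ_mulVec {B : Matrix (Fin 3) (Fin 3) ℝ} (hB : ∀ i j, ∃ z : ℤ, B i j = z)
    {v : Eu 3} (hv : isZ v) : isZ (B.mulVec v) := by
  intro i
  have he : B.mulVec v i = B i 0 * v 0 + B i 1 * v 1 + B i 2 * v 2 := by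
    simp [Matrix.mulVec, dotProduct, Fin.sum_univ_three]
  obtain ⟨b0, h0⟩ := hB i 0; obtain ⟨b1, h1⟩ := hB i 1; obtain ⟨b2, h2⟩ := hB i 2
  obtain ⟨v0, g0⟩ := hv 0; obtain ⟨v1, g1⟩ := hv 1; obtain ⟨v2, g2⟩ := hv 2
  exact ⟨b0 * v0 + b1 * v1 + b2 * v2, by rw [he, h0, h1, h2, g0, g1, g2]; push_cast; ring⟩

lemma normCond_Bint {φ : Aff 3} (hφ : normCond φ) : ∀ i j, ∃ z : ℤ, φ.mat i j = z := by
  obtain ⟨-, C, -, -, δ, hδ, hmat⟩ := hφ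
  intro i j
  rw [hmat]
  have hδ' : ∃ d : ℤ, δ = (d : ℝ) := by
    rcases hδ with h | h
    · exact ⟨1, by rw [h]; norm_num⟩
    · exact ⟨-1, by rw [h]; push_cast; norm_num⟩
  obtain ⟨d, hd⟩ := hδ'
  fin_cases i <;> fin_cases j <;>
    first
      | exact ⟨C 0 0, rfl⟩ | exact ⟨C 0 1, rfl⟩ | exact ⟨C 1 0, rfl⟩ | exact ⟨C 1 1, rfl⟩
      | exact ⟨d, by rw [← hd]; rfl⟩
      | exact ⟨0, by simp [blockMat]⟩

lemma eq_tr_of_A_eq_one {g : Aff 3} (hg : g.A = 1) : g = Aff.tr g.a := by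
  cases g; simp_all [Aff.tr]

lemma units_coe_mul_inv (u : Matrix.GeneralLinearGroup (Fin 3) ℝ) :
    (u : Matrix (Fin 3) (Fin 3) ℝ) * ((u⁻¹ : Matrix.GeneralLinearGroup (Fin 3) ℝ)
      : Matrix (Fin 3) (Fin 3) ℝ) = 1 := by
  rw [← Units.val_mul, mul_inv_cancel, Units.val_one]

lemma units_coe_inv_mul (u : Matrix.GeneralLinearGroup (Fin 3) ℝ) :
    ((u⁻¹ : Matrix.GeneralLinearGroup (Fin 3) ℝ) : Matrix (Fin 3) (Fin 3) ℝ)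
      * (u : Matrix (Fin 3) (Fin 3) ℝ) = 1 := by
  rw [← Units.val_mul, inv_mul_cancel, Units.val_one]

lemma conj_A_D {φ : Aff 3} (hBD : φ.mat * (Dg : Matrix (Fin 3) (Fin 3) ℝ)
      = (Dg : Matrix (Fin 3) (Fin 3) ℝ) * φ.mat) :
    φ.A * Dg * φ.A⁻¹ = Dg := by
  apply Units.ext
  show (φ.A : Matrix (Fin 3) (Fin 3) ℝ) * (Dg : Matrix (Fin 3) (Fin 3) ℝ)
      * ((φ.A⁻¹ : Matrix.GeneralLinearGroup (Fin 3) ℝ) : Matrix (Fin 3) (Fin 3) ℝ) = _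
  have : (φ.A : Matrix (Fin 3) (Fin 3) ℝ) * (Dg : Matrix (Fin 3) (Fin 3) ℝ)
      = (Dg : Matrix (Fin 3) (Fin 3) ℝ) * (φ.A : Matrix (Fin 3) (Fin 3) ℝ) := hBD
  rw [this, mul_assoc, units_coe_mul_inv, mul_one]

lemma normCond_conj {φ : Aff 3} (hφ : normCond φ) : ∀ g ∈ M, φ * g * φ⁻¹ ∈ M := by
  obtain ⟨⟨z2, hz2⟩, C, hu, hev, δ, hδ, hmat⟩ := hφ
  have hBint := normCond_Bint ⟨⟨z2, hz2⟩, C, hu, hev, δ, hδ, hmat⟩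
  have hBD : φ.mat * (Dg : Matrix (Fin 3) (Fin 3) ℝ)
      = (Dg : Matrix (Fin 3) (Fin 3) ℝ) * φ.mat := by
    rw [hmat]; exact blockMat_comm_Dg _ _
  have hADA : φ.A * Dg * φ.A⁻¹ = Dg := conj_A_D hBD
  intro g hg
  rw [mem_M_iff] at hg ⊢
  rcases hg with ⟨hg1, hg2⟩ | ⟨hg1, hg2⟩
  · left
    rw [eq_tr_of_A_eq_one hg1, conj_tr]
    exact ⟨tr_A _, isZ_mulVec hBint hg2⟩
  · right
    rw [conj_eq, hg1, hADA]
    refine ⟨rfl, ?_⟩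
    show isZ (φ.a + φ.mat.mulVec g.a
        - (Dg : Matrix (Fin 3) (Fin 3) ℝ).mulVec φ.a - αg.a)
    have key : φ.a + φ.mat.mulVec g.a - (Dg : Matrix (Fin 3) (Fin 3) ℝ).mulVec φ.a - αg.a
        = φ.mat.mulVec (g.a - αg.a) + (φ.mat.mulVec αg.a - αg.a)
          + (φ.a - (Dg : Matrix (Fin 3) (Fin 3) ℝ).mulVec φ.a) := by
      rw [Matrix.mulVec_sub]; ring
    rw [key]
    refine isZ_add (isZ_add (isZ_mulVec hBint hg2) ?_) ?_
    · -- B s - s is integral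
      obtain ⟨m, hm⟩ := C00_odd hu hev
      obtain ⟨k, hk⟩ := hev
      intro i
      have hs : φ.mat.mulVec αg.a = fun i => φ.mat i 0 * (1/2 : ℝ) := by
        rw [αg_a]; exact Matrix.mulVec_single _ _ _
      fin_cases i
      · refine ⟨m, ?_⟩
        show φ.mat.mulVec αg.a 0 - αg.a 0 = (m : ℝ)
        rw [hs]
        show φ.mat 0 0 * (1/2 : ℝ) - (1/2 : ℝ) = m
        rw [hmat]
        show ((C 0 0 : ℝ)) * (1/2) - (1/2 : ℝ) = m
        rw [hm]; push_cast; ring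
      · refine ⟨k, ?_⟩
        show φ.mat.mulVec αg.a 1 - αg.a 1 = (k : ℝ)
        rw [hs]
        show φ.mat 1 0 * (1/2 : ℝ) - αg.a 1 = k
        rw [hmat]
        show ((C 1 0 : ℝ)) * (1/2) - αg.a 1 = k
        rw [hk, αg_a]
        rw [Pi.single_eq_of_ne (by decide)]
        push_cast; ring
      · refine ⟨0, ?_⟩
        show φ.mat.mulVec αg.a 2 - αg.a 2 = ((0:ℤ) : ℝ)
        rw [hs]
        show φ.mat 2 0 * (1/2 : ℝ) - αg.a 2 = ((0:ℤ) : ℝ)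
        rw [hmat]
        show (blockMat (C.map (fun z : ℤ => (z:ℝ))) δ) 2 0 * (1/2 : ℝ) - αg.a 2 = ((0:ℤ) : ℝ)
        rw [blockMat_apply_20, αg_a, Pi.single_eq_of_ne (by decide)]
        push_cast; ring
    · -- b - D b is integral
      intro i
      have hD := Dg_mulVec φ.a
      fin_cases i
      · refine ⟨0, ?_⟩
        show φ.a 0 - (Dg : Matrix (Fin 3) (Fin 3) ℝ).mulVec φ.a 0 = ((0:ℤ) : ℝ)
        rw [hD 0]
        show φ.a 0 - 1 * φ.a 0 = ((0:ℤ) : ℝ)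
        push_cast; ring
      · refine ⟨0, ?_⟩
        show φ.a 1 - (Dg : Matrix (Fin 3) (Fin 3) ℝ).mulVec φ.a 1 = ((0:ℤ) : ℝ)
        rw [hD 1]
        show φ.a 1 - 1 * φ.a 1 = ((0:ℤ) : ℝ)
        push_cast; ring
      · refine ⟨z2, ?_⟩
        show φ.a 2 - (Dg : Matrix (Fin 3) (Fin 3) ℝ).mulVec φ.a 2 = (z2 : ℝ)
        rw [hD 2]
        show φ.a 2 - (-1) * φ.a 2 = (z2 : ℝ)
        linarith [hz2]

end N31Aux

namespace N31Aux

open N31 Aff Matrix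

lemma intInv_facts {C : Matrix (Fin 2) (Fin 2) ℤ} (hu : IsUnit C.det) :
    C * C⁻¹ = 1 ∧ C⁻¹ * C = 1 ∧ IsUnit (C⁻¹).det ∧ ((2:ℤ) ∣ C 1 0 → (2:ℤ) ∣ C⁻¹ 1 0) := by
  have h1 := Matrix.mul_nonsing_inv C hu
  have h2 := Matrix.nonsing_inv_mul C hu
  refine ⟨h1, h2, ?_, ?_⟩
  · exact IsUnit.of_mul_eq_one _ (by rw [← Matrix.det_mul, h2, Matrix.det_one])
  · intro he
    rw [Matrix.inv_def]
    obtain ⟨k, hk⟩ := he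
    refine ⟨Ring.inverse C.det * (-k), ?_⟩
    have hadj : C.adjugate 1 0 = -(C 1 0) := by
      rw [Matrix.adjugate_fin_two]; rfl
    show (Ring.inverse C.det • C.adjugate) 1 0 = _
    rw [Matrix.smul_apply, hadj, hk, smul_eq_mul]
    ring

lemma map_intMul (C C' : Matrix (Fin 2) (Fin 2) ℤ) :
    (C * C').map (fun z : ℤ => (z : ℝ))
      = C.map (fun z : ℤ => (z : ℝ)) * C'.map (fun z : ℤ => (z : ℝ)) :=
  Matrix.map_mul (f := Int.castRingHom ℝ)

lemma map_intOne : (1 : Matrix (Fin 2) (Fin 2) ℤ).map (fun z : ℤ => (z : ℝ)) = 1 :=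
  Matrix.map_one _ Int.cast_zero Int.cast_one

lemma normCond_inv {φ : Aff 3} (hφ : normCond φ) : normCond φ⁻¹ := by
  obtain ⟨⟨z2, hz2⟩, C, hu, hev, δ, hδ, hmat⟩ := hφ
  obtain ⟨hCC', hC'C, hu', hev'⟩ := intInv_facts hu
  have hδδ : δ * δ = 1 := by rcases hδ with h | h <;> rw [h] <;> norm_num
  have hBinv : ((φ.A⁻¹ : Matrix.GeneralLinearGroup (Fin 3) ℝ) : Matrix (Fin 3) (Fin 3) ℝ)
      = blockMat ((C⁻¹).map (fun z : ℤ => (z : ℝ))) δ := by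
    apply gl_inv_coe
    show φ.mat * _ = 1
    rw [hmat, blockMat_mul, ← map_intMul, hCC', map_intOne, hδδ, blockMat_one]
  constructor
  · -- translation part
    have ha : (φ⁻¹).a = -(((φ.A⁻¹ : Matrix.GeneralLinearGroup (Fin 3) ℝ)
        : Matrix (Fin 3) (Fin 3) ℝ).mulVec φ.a) := rfl
    have h2 : (φ⁻¹).a 2 = -(δ * φ.a 2) := by
      rw [ha, hBinv]
      show -((blockMat _ δ).mulVec φ.a 2) = _
      rw [blockMat_mulVec]
      norm_num
      rfl
    rcases hδ with h | h
    · exact ⟨-z2, by rw [h2, h]; push_cast; linarith [hz2]⟩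
    · exact ⟨z2, by rw [h2, h]; linarith [hz2]⟩
  · exact ⟨C⁻¹, hu', hev' hev, δ, hδ, hBinv⟩

end N31Aux

namespace N31Aux

open N31 Aff Matrix

lemma t_mem (i : Fin 3) : Aff.tr (Pi.single i (1:ℝ)) ∈ M := by
  apply Subgroup.subset_closure
  fin_cases i <;> simp

lemma αg_mem : αg ∈ M := Subgroup.subset_closure (by simp)

lemma mulVec_single_entry (B : Matrix (Fin 3) (Fin 3) ℝ) (i j : Fin 3) :
    B.mulVec (Pi.single j (1:ℝ)) i = B i j := by
  rw [Matrix.mulVec_single]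
  exact mul_one _

lemma normalizer_iff (φ : Aff 3) : φ ∈ Subgroup.normalizer (M : Set (Aff 3)) ↔ normCond φ := by
  rw [Subgroup.mem_normalizer_iff]
  constructor
  · intro hn
    -- integrality of the matrix part
    have hBint : ∀ i j : Fin 3, ∃ z : ℤ, φ.mat i j = z := by
      intro i j
      have h := (hn (Aff.tr (Pi.single j (1:ℝ)))).mp (t_mem j)
      rw [conj_tr, mem_M_iff] at h
      rcases h with ⟨-, h2⟩ | ⟨h1, -⟩
      · obtain ⟨z, hz⟩ := h2 i
        exact ⟨z, by rw [← mulVec_single_entry φ.mat i j]; exact hz⟩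
      · exact absurd ((tr_A _).symm.trans h1) (fun hh => Dg_ne_one hh.symm)
    -- integrality of the inverse matrix part
    have hB'int : ∀ i j : Fin 3, ∃ z : ℤ,
        ((φ.A⁻¹ : Matrix.GeneralLinearGroup (Fin 3) ℝ) : Matrix (Fin 3) (Fin 3) ℝ) i j = z := by
      intro i j
      have hmem : φ⁻¹ * Aff.tr (Pi.single j (1:ℝ)) * φ ∈ M := by
        apply (hn _).mpr
        have : φ * (φ⁻¹ * Aff.tr (Pi.single j (1:ℝ)) * φ) * φ⁻¹
            = Aff.tr (Pi.single j (1:ℝ)) := by group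
        rw [this]; exact t_mem j
      rw [show φ⁻¹ * Aff.tr (Pi.single j (1:ℝ)) * φ
          = φ⁻¹ * Aff.tr (Pi.single j (1:ℝ)) * (φ⁻¹)⁻¹ by rw [inv_inv], conj_tr,
        mem_M_iff] at hmem
      rcases hmem with ⟨-, h2⟩ | ⟨h1, -⟩
      · obtain ⟨z, hz⟩ := h2 i
        exact ⟨z, by
          rw [← mulVec_single_entry ((φ.A⁻¹ : Matrix.GeneralLinearGroup (Fin 3) ℝ)
            : Matrix (Fin 3) (Fin 3) ℝ) i j]
          exact hz⟩
      · exact absurd ((tr_A _).symm.trans h1) (fun hh => Dg_ne_one hh.symm)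
    -- conjugate of αg
    have hα := (hn αg).mp αg_mem
    rw [conj_eq, mem_M_iff] at hα
    rcases hα with ⟨h1, -⟩ | ⟨h1, h2⟩
    · -- impossible: would make Dg = 1
      exfalso
      apply Dg_ne_one
      have : αg.A = 1 := by
        have h := congrArg (fun u => φ.A⁻¹ * u * φ.A) h1
        simpa [mul_assoc] using h
      exact this
    · -- main case
      have h1' : φ.A * Dg * φ.A⁻¹ = Dg := h1
      have hcomm : φ.A * Dg = Dg * φ.A := by
        have := congrArg (fun u => u * φ.A) h1'
        simpa [mul_assoc] using this
      have hBD : φ.mat * (Dg : Matrix (Fin 3) (Fin 3) ℝ)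
          = (Dg : Matrix (Fin 3) (Fin 3) ℝ) * φ.mat := by
        have := congrArg Units.val hcomm
        exact this
      -- entry equations from commuting with Dg
      have hentry : ∀ i j : Fin 3, φ.mat i j * ![1,1,-1] j = ![1,1,-1] i * φ.mat i j := by
        intro i j
        have := congrFun (congrFun hBD i) j
        rwa [coe_Dg, Matrix.mul_diagonal, Matrix.diagonal_mul] at this
      have hB02 : φ.mat 0 2 = 0 := by have := hentry 0 2; norm_num [Matrix.cons_val_two] at this; linarith
      have hB12 : φ.mat 1 2 = 0 := by have := hentry 1 2; norm_num [Matrix.cons_val_two] at this; linarith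
      have hB20 : φ.mat 2 0 = 0 := by have := hentry 2 0; norm_num [Matrix.cons_val_two] at this; linarith
      have hB21 : φ.mat 2 1 = 0 := by have := hentry 2 1; norm_num [Matrix.cons_val_two] at this; linarith
      -- integer entries
      obtain ⟨z00, h00⟩ := hBint 0 0
      obtain ⟨z01, h01⟩ := hBint 0 1
      obtain ⟨z10, h10⟩ := hBint 1 0
      obtain ⟨z11, h11⟩ := hBint 1 1
      obtain ⟨z22, h22⟩ := hBint 2 2
      obtain ⟨w00, g00⟩ := hB'int 0 0
      obtain ⟨w01, g01⟩ := hB'int 0 1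
      obtain ⟨w10, g10⟩ := hB'int 1 0
      obtain ⟨w11, g11⟩ := hB'int 1 1
      obtain ⟨w22, g22⟩ := hB'int 2 2
      have hBB' : φ.mat * ((φ.A⁻¹ : Matrix.GeneralLinearGroup (Fin 3) ℝ)
          : Matrix (Fin 3) (Fin 3) ℝ) = 1 := units_coe_mul_inv φ.A
      have hmul : ∀ i j : Fin 3, φ.mat i 0 *
          ((φ.A⁻¹ : Matrix.GeneralLinearGroup (Fin 3) ℝ) : Matrix (Fin 3) (Fin 3) ℝ) 0 j
          + φ.mat i 1 * ((φ.A⁻¹ : _) : Matrix (Fin 3) (Fin 3) ℝ) 1 j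
          + φ.mat i 2 * ((φ.A⁻¹ : _) : Matrix (Fin 3) (Fin 3) ℝ) 2 j
          = (1 : Matrix (Fin 3) (Fin 3) ℝ) i j := by
        intro i j
        have := congrFun (congrFun hBB' i) j
        rwa [Matrix.mul_apply, Fin.sum_univ_three] at this
      -- δ = ±1
      have hδpm : z22 = 1 ∨ z22 = -1 := by
        have h := hmul 2 2
        rw [hB20, hB21, h22, g22] at h
        norm_num at h
        have : z22 * w22 = 1 := by exact_mod_cast h
        rcases Int.mul_eq_one_iff_eq_one_or_neg_one.mp this with ⟨ha, -⟩ | ⟨ha, -⟩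
        · exact Or.inl ha
        · exact Or.inr ha
      -- the 2x2 integer matrix
      set C : Matrix (Fin 2) (Fin 2) ℤ := !![z00, z01; z10, z11] with hC
      set C' : Matrix (Fin 2) (Fin 2) ℤ := !![w00, w01; w10, w11] with hC'
      have hCC' : C * C' = 1 := by
        have e00 := hmul 0 0; have e01 := hmul 0 1
        have e10 := hmul 1 0; have e11 := hmul 1 1
        rw [hB02, h00, h01, g00, g10] at e00
        rw [hB02, h00, h01, g01, g11] at e01
        rw [hB12, h10, h11, g00, g10] at e10
        rw [hB12, h10, h11, g01, g11] at e11
        norm_num at e00 e01 e10 e11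
        have f00 : z00 * w00 + z01 * w10 = 1 := by exact_mod_cast e00
        have f01 : z00 * w01 + z01 * w11 = 0 := by exact_mod_cast e01
        have f10 : z10 * w00 + z11 * w10 = 0 := by exact_mod_cast e10
        have f11 : z10 * w01 + z11 * w11 = 1 := by exact_mod_cast e11
        ext i j
        fin_cases i <;> fin_cases j <;>
          simp [hC, hC', Matrix.mul_apply, Fin.sum_univ_two, Matrix.one_apply,
            f00, f01, f10, f11]
      have hudet : IsUnit C.det :=
        IsUnit.of_mul_eq_one _ (by rw [← Matrix.det_mul, hCC', Matrix.det_one])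
      -- translation conditions
      have h2' : isZ (φ.a + φ.mat.mulVec αg.a
          - (Dg : Matrix (Fin 3) (Fin 3) ℝ).mulVec φ.a - αg.a) := by
        have := h2
        rw [show φ.A * αg.A * φ.A⁻¹ = Dg from h1'] at this
        exact this
      have hs : ∀ i, φ.mat.mulVec αg.a i = φ.mat i 0 * (1/2 : ℝ) := by
        intro i
        rw [αg_a, Matrix.mulVec_single]
        rfl
      have hb2 : ∃ z : ℤ, 2 * φ.a 2 = (z : ℝ) := by
        obtain ⟨z, hz⟩ := h2' 2
        refine ⟨z, ?_⟩
        have hc : (φ.a + φ.mat.mulVec αg.a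
            - (Dg : Matrix (Fin 3) (Fin 3) ℝ).mulVec φ.a - αg.a) 2
            = φ.a 2 + φ.mat 2 0 * (1/2) - (-1) * φ.a 2 - 0 := by
          have hD := Dg_mulVec φ.a 2
          show φ.a 2 + φ.mat.mulVec αg.a 2 - (Dg : Matrix (Fin 3) (Fin 3) ℝ).mulVec φ.a 2
              - αg.a 2 = _
          rw [hs 2, hD, αg_a, Pi.single_eq_of_ne (by decide)]
          norm_num [Matrix.cons_val_two]
        rw [hc, hB20] at hz
        rw [← hz]; ring
      have hev : (2:ℤ) ∣ C 1 0 := by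
        obtain ⟨z, hz⟩ := h2' 1
        have hc : (φ.a + φ.mat.mulVec αg.a
            - (Dg : Matrix (Fin 3) (Fin 3) ℝ).mulVec φ.a - αg.a) 1
            = φ.a 1 + φ.mat 1 0 * (1/2) - 1 * φ.a 1 - 0 := by
          have hD := Dg_mulVec φ.a 1
          show φ.a 1 + φ.mat.mulVec αg.a 1 - (Dg : Matrix (Fin 3) (Fin 3) ℝ).mulVec φ.a 1
              - αg.a 1 = _
          rw [hs 1, hD, αg_a, Pi.single_eq_of_ne (by decide)]
          norm_num
        rw [hc, h10] at hz
        have : (z10 : ℝ) = 2 * z := by linarith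
        have hzz : z10 = 2 * z := by exact_mod_cast this
        refine ⟨z, ?_⟩
        have hC10 : C 1 0 = z10 := by rw [hC]; rfl
        rw [hC10]; exact hzz
      refine ⟨hb2, C, hudet, hev, (z22 : ℝ), ?_, ?_⟩
      · rcases hδpm with h | h <;> rw [h] <;> [left; right] <;> push_cast <;> ring
      · ext i j
        fin_cases i <;> fin_cases j <;>
          simp only [Matrix.map_apply, blockMat_apply_00, blockMat_apply_01,
            blockMat_apply_02, blockMat_apply_10, blockMat_apply_11, blockMat_apply_12,
            blockMat_apply_20, blockMat_apply_21, blockMat_apply_22]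
        · exact h00
        · exact h01
        · exact hB02
        · exact h10
        · exact h11
        · exact hB12
        · exact hB20
        · exact hB21
        · exact h22
  · intro hφ h
    constructor
    · exact fun hm => normCond_conj hφ h hm
    · intro hm
      have hin := normCond_conj (normCond_inv hφ) _ hm
      have key : φ⁻¹ * (φ * h * φ⁻¹) * φ⁻¹⁻¹ = h := by group
      rwa [key] at hin

end N31Aux

namespace N31Aux

open N31 Aff Matrix

lemma tr_zero : Aff.tr (0 : Eu 3) = 1 := rfl

lemma tr_inv (v : Eu 3) : (Aff.tr v)⁻¹ = Aff.tr (-v) := by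
  apply inv_eq_of_mul_eq_one_right
  rw [tr_mul_tr, add_neg_cancel, tr_zero]

/-- generators as elements of `↥M` -/
noncomputable def t1e : ↥M := ⟨Aff.tr (Pi.single 0 1), t_mem 0⟩
noncomputable def t2e : ↥M := ⟨Aff.tr (Pi.single 1 1), t_mem 1⟩
noncomputable def t3e : ↥M := ⟨Aff.tr (Pi.single 2 1), t_mem 2⟩
noncomputable def ae : ↥M := ⟨αg, αg_mem⟩

lemma Dg_mulVec_s : (Dg : Matrix (Fin 3) (Fin 3) ℝ).mulVec αg.a = αg.a := by
  funext i
  rw [Dg_mulVec, αg_a]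
  fin_cases i <;> simp [Pi.single_apply]

/-- `α² = t₁` -/
lemma ae_sq : ae * ae = t1e := by
  apply Subtype.ext
  show αg * αg = Aff.tr (Pi.single 0 1)
  ext1
  · show αg.a + αg.mat.mulVec αg.a = Pi.single 0 1
    have : αg.mat = (Dg : Matrix (Fin 3) (Fin 3) ℝ) := rfl
    rw [this, Dg_mulVec_s, αg_a]
    funext i
    fin_cases i <;> simp [Pi.single_apply] <;> norm_num
  · exact Dg_mul_Dg

/-- translations with last coordinate zero are central in `M` -/
lemma tr_comm_mem {v : Eu 3} (hv : v 2 = 0) : ∀ g ∈ M, Aff.tr v * g = g * Aff.tr v := by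
  intro g hg
  have hDv : (Dg : Matrix (Fin 3) (Fin 3) ℝ).mulVec v = v := by
    funext i
    rw [Dg_mulVec]
    fin_cases i <;> simp [hv]
  rw [mem_M_iff] at hg
  rcases hg with ⟨h1, -⟩ | ⟨h1, -⟩
  · rw [eq_tr_of_A_eq_one h1, tr_mul_tr, tr_mul_tr, add_comm]
  · ext1
    · show v + (Aff.tr v).mat.mulVec g.a = g.a + g.mat.mulVec v
      have hm : (Aff.tr v).mat = 1 := rfl
      have hg' : g.mat = (Dg : Matrix (Fin 3) (Fin 3) ℝ) := by
        show (g.A : Matrix (Fin 3) (Fin 3) ℝ) = _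
        rw [h1]
      rw [hm, Matrix.one_mulVec, hg', hDv, add_comm]
    · show (Aff.tr v).A * g.A = g.A * (Aff.tr v).A
      rw [tr_A, one_mul, mul_one]

/-- conjugation inside M of a translation -/
lemma conj_tr_mem {x : Aff 3} (v : Eu 3) :
    x * Aff.tr v * x⁻¹ = Aff.tr (x.mat.mulVec v) := conj_tr x v

lemma t3e_ne_one : t3e ≠ 1 := by
  intro h
  have : (Pi.single 2 1 : Eu 3) 2 = (0 : Eu 3) 2 := by
    have hval : (Aff.tr (Pi.single 2 (1:ℝ))).a = (1 : Aff 3).a := by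
      rw [show Aff.tr (Pi.single 2 (1:ℝ)) = (1 : Aff 3) from congrArg Subtype.val h]
    simpa [tr_a] using congrFun hval 2
  simp at this

lemma val_zpow (x : ↥M) (n : ℤ) : ((x ^ n : ↥M) : Aff 3) = (x : Aff 3) ^ n :=
  SubgroupClass.coe_zpow x n

lemma t3e_zpow_val (n : ℤ) : ((t3e ^ n : ↥M) : Aff 3) = Aff.tr (n • Pi.single 2 (1:ℝ)) := by
  rw [val_zpow]
  show (Aff.tr (Pi.single 2 1)) ^ n = _
  rw [tr_zpow]

/-- a D-type element of M cannot be conjugated (within M) to its inverse -/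
lemma no_Dtype_inverted {x y : Aff 3} (hx : x ∈ M) (hy : y ∈ M) (hyA : y.A = Dg) :
    x * y * x⁻¹ ≠ y⁻¹ := by
  intro heq
  have hxA : x.A * y.A * x.A⁻¹ = Dg := by
    rw [hyA]
    rw [mem_M_iff] at hx
    rcases hx with ⟨h1, -⟩ | ⟨h1, -⟩
    · rw [h1]; group
    · rw [h1]; group
  have hmat0 : x.mat.mulVec y.a 0 = y.a 0 := by
    rw [mem_M_iff] at hx
    rcases hx with ⟨h1, -⟩ | ⟨h1, -⟩
    · have hm : x.mat = 1 := by
        show (x.A : Matrix (Fin 3) (Fin 3) ℝ) = 1; rw [h1]; rfl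
      rw [hm, Matrix.one_mulVec]
    · have hm : x.mat = (Dg : Matrix (Fin 3) (Fin 3) ℝ) := by
        show (x.A : Matrix (Fin 3) (Fin 3) ℝ) = _; rw [h1]
      rw [hm, Dg_mulVec]
      norm_num
  have ha := congrArg Aff.a heq
  rw [conj_eq] at ha
  have h0 := congrFun ha 0
  have hL : (x.a + x.mat.mulVec y.a
      - ((x.A * y.A * x.A⁻¹ : Matrix.GeneralLinearGroup (Fin 3) ℝ)
        : Matrix (Fin 3) (Fin 3) ℝ).mulVec x.a) 0 = y.a 0 := by
    rw [hxA]
    show x.a 0 + x.mat.mulVec y.a 0 - (Dg : Matrix (Fin 3) (Fin 3) ℝ).mulVec x.a 0 = _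
    rw [hmat0, Dg_mulVec]
    norm_num
  have hinv : (y⁻¹).a 0 = -(y.a 0) := by
    have : (y⁻¹).a = -(((y.A⁻¹ : Matrix.GeneralLinearGroup (Fin 3) ℝ)
        : Matrix (Fin 3) (Fin 3) ℝ).mulVec y.a) := rfl
    rw [this, hyA, Dg_inv]
    show -((Dg : Matrix (Fin 3) (Fin 3) ℝ).mulVec y.a 0) = _
    rw [Dg_mulVec]
    norm_num
  have hy0 : y.a 0 = 0 := by
    have : y.a 0 = -(y.a 0) := by
      rw [← hinv, ← h0]
      exact hL.symm
    linarith
  rw [mem_M_iff] at hy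
  rcases hy with ⟨h1, -⟩ | ⟨-, h2⟩
  · exact Dg_ne_one (by rw [← hyA, h1])
  · obtain ⟨z, hz⟩ := h2 0
    have : (y.a - αg.a) 0 = -(1/2 : ℝ) := by
      show y.a 0 - αg.a 0 = _
      rw [hy0, αg_a]
      norm_num
    rw [this] at hz
    have h2z : (2 * z : ℝ) = -1 := by push_cast; linarith
    have : (2 * z : ℤ) = -1 := by exact_mod_cast h2z
    omega

end N31Aux

namespace N31Aux

open N31 Aff Matrix

lemma commutes_of_image (f : MulAut ↥M) {x : ↥M} (hc : ∀ y : ↥M, x * y = y * x) :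
    ∀ y : ↥M, f x * y = y * f x := by
  intro y
  calc f x * y = f x * f (f.symm y) := by rw [MulEquiv.apply_symm_apply]
    _ = f (x * f.symm y) := by rw [_root_.map_mul]
    _ = f (f.symm y * x) := by rw [hc]
    _ = f (f.symm y) * f x := by rw [_root_.map_mul]
    _ = y * f x := by rw [MulEquiv.apply_symm_apply]

lemma central_of_tr {x : ↥M} (h1 : (x : Aff 3).A = 1) (h3 : (x : Aff 3).a 2 = 0) :
    ∀ y : ↥M, x * y = y * x := by
  intro y
  apply Subtype.ext
  show (x : Aff 3) * (y : Aff 3) = (y : Aff 3) * (x : Aff 3)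
  rw [eq_tr_of_A_eq_one h1]
  exact tr_comm_mem h3 _ y.2

lemma central_image (f : MulAut ↥M) {x : ↥M} (h1 : (x : Aff 3).A = 1)
    (h3 : (x : Aff 3).a 2 = 0) :
    ((f x : ↥M) : Aff 3).A = 1 ∧ isZ ((f x : ↥M) : Aff 3).a
      ∧ ((f x : ↥M) : Aff 3).a 2 = 0 := by
  have hfc := commutes_of_image f (central_of_tr h1 h3)
  set g : Aff 3 := ((f x : ↥M) : Aff 3) with hg
  have hgA : g.A = 1 := by
    by_contra hne
    have hmem := (f x).2
    rw [mem_M_iff] at hmem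
    rcases hmem with ⟨hA, -⟩ | ⟨hA, -⟩
    · exact hne hA
    · -- D-type: contradiction with commuting with t3
      have hcom := congrArg (fun u : ↥M => ((u : ↥M) : Aff 3).a 2) (hfc t3e)
      have hL : ((f x * t3e : ↥M) : Aff 3).a 2 = g.a 2 - 1 := by
        show (g * Aff.tr (Pi.single 2 1)).a 2 = _
        rw [Aff.mul_a]
        show g.a 2 + g.mat.mulVec (Pi.single 2 1) 2 = _
        have hm : g.mat = (Dg : Matrix (Fin 3) (Fin 3) ℝ) := by
          show (g.A : Matrix (Fin 3) (Fin 3) ℝ) = _; rw [hA]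
        rw [hm, Dg_mulVec]
        simp
        ring
      have hR : ((t3e * f x : ↥M) : Aff 3).a 2 = 1 + g.a 2 := by
        show (Aff.tr (Pi.single 2 1) * g).a 2 = _
        rw [Aff.mul_a]
        show (Pi.single 2 1 : Eu 3) 2 + (Aff.tr (Pi.single 2 1)).mat.mulVec g.a 2 = _
        have hm : (Aff.tr (Pi.single 2 1 : Eu 3)).mat = 1 := rfl
        rw [hm, Matrix.one_mulVec]
        simp
      rw [hL, hR] at hcom
      linarith
  refine ⟨hgA, ?_, ?_⟩
  · have hmem := (f x).2
    rw [mem_M_iff] at hmem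
    rcases hmem with ⟨-, h⟩ | ⟨hA, -⟩
    · exact h
    · exact absurd (by rw [← hA, hgA]) Dg_ne_one
  · -- commute with ae forces third coordinate zero
    have hcom := congrArg (fun u : ↥M => ((u : ↥M) : Aff 3).a 2) (hfc ae)
    have hL : ((f x * ae : ↥M) : Aff 3).a 2 = g.a 2 := by
      show (g * αg).a 2 = _
      rw [Aff.mul_a]
      show g.a 2 + g.mat.mulVec αg.a 2 = _
      have hm : g.mat = 1 := by
        show (g.A : Matrix (Fin 3) (Fin 3) ℝ) = 1; rw [hgA]; rfl
      rw [hm, Matrix.one_mulVec, αg_a, Pi.single_eq_of_ne (by decide)]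
      ring
    have hR : ((ae * f x : ↥M) : Aff 3).a 2 = -(g.a 2) := by
      show (αg * g).a 2 = _
      rw [Aff.mul_a]
      show αg.a 2 + αg.mat.mulVec g.a 2 = _
      have hm : αg.mat = (Dg : Matrix (Fin 3) (Fin 3) ℝ) := rfl
      rw [hm, Dg_mulVec, αg_a, Pi.single_eq_of_ne (by decide)]
      norm_num
      show (-1 : ℝ) * g.a 2 = -g.a 2
      ring
    rw [hL, hR] at hcom
    linarith

/-- the defining relation `α t₃ α⁻¹ = t₃⁻¹` -/
lemma ae_t3e_rel : ae * t3e * ae⁻¹ = t3e⁻¹ := by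
  apply Subtype.ext
  show αg * Aff.tr (Pi.single 2 1) * αg⁻¹ = (Aff.tr (Pi.single 2 1))⁻¹
  rw [conj_tr, tr_inv]
  congr 1
  funext i
  have hm : αg.mat = (Dg : Matrix (Fin 3) (Fin 3) ℝ) := rfl
  rw [hm, Dg_mulVec]
  fin_cases i <;> simp [Pi.single_apply]

lemma image_t3_aux (f : MulAut ↥M) : ∃ m : ℤ, f t3e = t3e ^ m := by
  have hrel : f ae * f t3e * (f ae)⁻¹ = (f t3e)⁻¹ := by
    rw [← _root_.map_mul, ← _root_.map_inv, ← _root_.map_mul, ae_t3e_rel, _root_.map_inv]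
  -- f t3e must be a translation
  have htA : ((f t3e : ↥M) : Aff 3).A = 1 := by
    have hmem := (f t3e).2
    rw [mem_M_iff] at hmem
    rcases hmem with ⟨hA, -⟩ | ⟨hA, -⟩
    · exact hA
    · exfalso
      have hval := congrArg Subtype.val hrel
      have : ((f ae : ↥M) : Aff 3) * ((f t3e : ↥M) : Aff 3) * ((f ae : ↥M) : Aff 3)⁻¹
          = ((f t3e : ↥M) : Aff 3)⁻¹ := by
        simpa using hval
      exact no_Dtype_inverted (f ae).2 (f t3e).2 hA this
  -- so f t3e = tr v with Dv = -v forced unless v = 0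
  obtain ⟨hAv, hZv, -⟩ : _ ∧ _ ∧ True := ⟨htA, by
    have hmem := (f t3e).2
    rw [mem_M_iff] at hmem
    rcases hmem with ⟨-, h⟩ | ⟨hA, -⟩
    · exact h
    · exact absurd (by rw [← hA, htA]) Dg_ne_one, trivial⟩
  set v : Eu 3 := ((f t3e : ↥M) : Aff 3).a with hv
  have hval : ((f t3e : ↥M) : Aff 3) = Aff.tr v := eq_tr_of_A_eq_one htA
  have hconj : ((f ae : ↥M) : Aff 3).mat.mulVec v = -v := by
    have hval2 := congrArg Subtype.val hrel
    have h2 : ((f ae : ↥M) : Aff 3) * Aff.tr v * ((f ae : ↥M) : Aff 3)⁻¹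
        = (Aff.tr v)⁻¹ := by
      rw [← hval]
      simpa using hval2
    rw [conj_tr, tr_inv] at h2
    exact congrArg Aff.a h2
  obtain ⟨z, hz⟩ := hZv 2
  refine ⟨z, ?_⟩
  apply Subtype.ext
  rw [t3e_zpow_val, hval]
  congr 1
  -- v = (0,0,z)
  rcases (by
    have hmem := (f ae).2
    rw [mem_M_iff] at hmem
    rcases hmem with ⟨hA, -⟩ | ⟨hA, -⟩
    · exact Or.inl hA
    · exact Or.inr hA : ((f ae : ↥M) : Aff 3).A = 1 ∨ ((f ae : ↥M) : Aff 3).A = Dg)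
    with hA | hA
  · -- conjugator a translation: v = -v so v = 0, f t3e = 1, contradiction
    exfalso
    have hm : ((f ae : ↥M) : Aff 3).mat = 1 := by
      show (((f ae : ↥M) : Aff 3).A : Matrix (Fin 3) (Fin 3) ℝ) = 1; rw [hA]; rfl
    rw [hm, Matrix.one_mulVec] at hconj
    have hv0 : v = 0 := by
      funext i
      have := congrFun hconj i
      show v i = (0 : ℝ)
      have : v i = -(v i) := this
      linarith
    apply t3e_ne_one
    apply f.injective
    apply Subtype.ext
    rw [hval, hv0, tr_zero, _root_.map_one]
    rfl
  · have hm : ((f ae : ↥M) : Aff 3).mat = (Dg : Matrix (Fin 3) (Fin 3) ℝ) := by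
      show (((f ae : ↥M) : Aff 3).A : Matrix (Fin 3) (Fin 3) ℝ) = _; rw [hA]
    rw [hm] at hconj
    funext i
    have hDi := Dg_mulVec v i
    have hci := congrFun hconj i
    rw [hDi] at hci
    fin_cases i
    · show v 0 = (z • (Pi.single 2 1 : Eu 3)) 0
      have : (1:ℝ) * v 0 = -(v 0) := by simpa using hci
      have hv0 : v 0 = 0 := by linarith
      rw [hv0]
      simp [Pi.single_eq_of_ne]
    · show v 1 = (z • (Pi.single 2 1 : Eu 3)) 1
      have : (1:ℝ) * v 1 = -(v 1) := by simpa using hci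
      have hv1 : v 1 = 0 := by linarith
      rw [hv1]
      simp [Pi.single_eq_of_ne]
    · show v 2 = (z • (Pi.single 2 1 : Eu 3)) 2
      rw [hz]
      simp

lemma image_t3 (f : MulAut ↥M) : ∃ m : ℤ, (m = 1 ∨ m = -1) ∧ f t3e = t3e ^ m := by
  obtain ⟨m, hm⟩ := image_t3_aux f
  obtain ⟨m', hm'⟩ := image_t3_aux f.symm
  have key : t3e = t3e ^ (m * m') := by
    calc t3e = f (f.symm t3e) := (f.apply_symm_apply t3e).symm
      _ = f (t3e ^ m') := by rw [hm']
      _ = (f t3e) ^ m' := by rw [_root_.map_zpow]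
      _ = (t3e ^ m) ^ m' := by rw [hm]
      _ = t3e ^ (m * m') := by rw [← _root_.zpow_mul]
  have hval := congrArg (fun u : ↥M => ((u : ↥M) : Aff 3).a 2) key
  rw [t3e_zpow_val] at hval
  have h1 : (Pi.single 2 1 : Eu 3) 2 = ((m * m' : ℤ) : ℝ) * (Pi.single 2 1 : Eu 3) 2 := by
    have h2 : ((m * m') • (Pi.single 2 1 : Eu 3)) 2
        = ((m * m' : ℤ) : ℝ) * (Pi.single 2 1 : Eu 3) 2 := by
      simp
    rw [← h2]
    exact hval
  rw [Pi.single_eq_same] at h1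
  have : (1 : ℝ) = ((m * m' : ℤ) : ℝ) := by simpa using h1
  have hint : m * m' = 1 := by exact_mod_cast this.symm
  rcases Int.mul_eq_one_iff_eq_one_or_neg_one.mp hint with ⟨h, -⟩ | ⟨h, -⟩
  · exact ⟨m, Or.inl h, hm⟩
  · exact ⟨m, Or.inr h, hm⟩

end N31Aux

namespace N31Aux

open N31 Aff Matrix

/-- the 2×2 integer matrix attached to an automorphism -/
noncomputable def Cf (f : MulAut ↥M) : Matrix (Fin 2) (Fin 2) ℤ :=
  !![⌊((f t1e : ↥M) : Aff 3).a 0⌋, ⌊((f t2e : ↥M) : Aff 3).a 0⌋;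
     ⌊((f t1e : ↥M) : Aff 3).a 1⌋, ⌊((f t2e : ↥M) : Aff 3).a 1⌋]

noncomputable def δf (f : MulAut ↥M) : ℤ := ⌊((f t3e : ↥M) : Aff 3).a 2⌋

noncomputable def εf (f : MulAut ↥M) : ZMod 2 :=
  ((⌊((f ae : ↥M) : Aff 3).a 2⌋ : ℤ) : ZMod 2)

lemma Cf_00 (f : MulAut ↥M) : Cf f 0 0 = ⌊((f t1e : ↥M) : Aff 3).a 0⌋ := by simp [Cf]
lemma Cf_01 (f : MulAut ↥M) : Cf f 0 1 = ⌊((f t2e : ↥M) : Aff 3).a 0⌋ := by simp [Cf]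
lemma Cf_10 (f : MulAut ↥M) : Cf f 1 0 = ⌊((f t1e : ↥M) : Aff 3).a 1⌋ := by simp [Cf]
lemma Cf_11 (f : MulAut ↥M) : Cf f 1 1 = ⌊((f t2e : ↥M) : Aff 3).a 1⌋ := by simp [Cf]

lemma t1e_central_data : ((t1e : ↥M) : Aff 3).A = 1 ∧ ((t1e : ↥M) : Aff 3).a 2 = 0 :=
  ⟨rfl, by show (Pi.single 0 1 : Eu 3) 2 = 0; rw [Pi.single_eq_of_ne (by decide)]⟩
lemma t2e_central_data : ((t2e : ↥M) : Aff 3).A = 1 ∧ ((t2e : ↥M) : Aff 3).a 2 = 0 :=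
  ⟨rfl, by show (Pi.single 1 1 : Eu 3) 2 = 0; rw [Pi.single_eq_of_ne (by decide)]⟩

lemma val_ft1 (f : MulAut ↥M) :
    ((f t1e : ↥M) : Aff 3) = Aff.tr ![((Cf f 0 0 : ℤ) : ℝ), ((Cf f 1 0 : ℤ) : ℝ), 0] := by
  obtain ⟨hA, hZ, h2⟩ := central_image f t1e_central_data.1 t1e_central_data.2
  refine Aff.ext ?_ hA
  funext i
  fin_cases i
  · show ((f t1e : ↥M) : Aff 3).a 0 = ((Cf f 0 0 : ℤ) : ℝ)
    obtain ⟨z, hz⟩ := hZ 0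
    rw [Cf_00, hz, Int.floor_intCast]
  · show ((f t1e : ↥M) : Aff 3).a 1 = ((Cf f 1 0 : ℤ) : ℝ)
    obtain ⟨z, hz⟩ := hZ 1
    rw [Cf_10, hz, Int.floor_intCast]
  · exact h2

lemma val_ft2 (f : MulAut ↥M) :
    ((f t2e : ↥M) : Aff 3) = Aff.tr ![((Cf f 0 1 : ℤ) : ℝ), ((Cf f 1 1 : ℤ) : ℝ), 0] := by
  obtain ⟨hA, hZ, h2⟩ := central_image f t2e_central_data.1 t2e_central_data.2
  refine Aff.ext ?_ hA
  funext i
  fin_cases i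
  · show ((f t2e : ↥M) : Aff 3).a 0 = ((Cf f 0 1 : ℤ) : ℝ)
    obtain ⟨z, hz⟩ := hZ 0
    rw [Cf_01, hz, Int.floor_intCast]
  · show ((f t2e : ↥M) : Aff 3).a 1 = ((Cf f 1 1 : ℤ) : ℝ)
    obtain ⟨z, hz⟩ := hZ 1
    rw [Cf_11, hz, Int.floor_intCast]
  · exact h2

lemma smul_single_vec (m : ℤ) :
    (m • (Pi.single 2 1 : Eu 3)) = ![0, 0, (m : ℝ)] := by
  funext i
  fin_cases i <;> simp [Pi.single_apply]

lemma val_ft3 (f : MulAut ↥M) :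
    ((f t3e : ↥M) : Aff 3) = Aff.tr ![0, 0, ((δf f : ℤ) : ℝ)]
      ∧ (δf f = 1 ∨ δf f = -1) := by
  obtain ⟨m, hpm, hm⟩ := image_t3 f
  have hval : ((f t3e : ↥M) : Aff 3) = Aff.tr (m • (Pi.single 2 1 : Eu 3)) := by
    rw [hm, t3e_zpow_val]
  have hδ : δf f = m := by
    rw [δf, hval]
    show ⌊(m • (Pi.single 2 1 : Eu 3)) 2⌋ = m
    rw [smul_single_vec]
    show ⌊(m : ℝ)⌋ = m
    exact Int.floor_intCast m
  constructor
  · rw [hval, smul_single_vec, hδ]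
  · rw [hδ]; exact hpm

lemma fae_spec (f : MulAut ↥M) :
    ∃ u v w : ℤ, ((f ae : ↥M) : Aff 3).A = Dg
      ∧ ((f ae : ↥M) : Aff 3).a = ![(u : ℝ) + 1/2, (v : ℝ), (w : ℝ)]
      ∧ εf f = ((w : ℤ) : ZMod 2)
      ∧ Cf f 0 0 = 2 * u + 1 ∧ Cf f 1 0 = 2 * v := by
  obtain ⟨m, hpm, hm⟩ := image_t3 f
  -- A-part is Dg
  have hA : ((f ae : ↥M) : Aff 3).A = Dg := by
    have hmem := (f ae).2
    rw [mem_M_iff] at hmem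
    rcases hmem with ⟨hA1, -⟩ | ⟨hA1, -⟩
    · exfalso
      have hrel : f ae * f t3e * (f ae)⁻¹ = (f t3e)⁻¹ := by
        rw [← _root_.map_mul, ← _root_.map_inv, ← _root_.map_mul, ae_t3e_rel,
          _root_.map_inv]
      have hval := congrArg Subtype.val hrel
      have hv : ((f ae : ↥M) : Aff 3) * ((f t3e : ↥M) : Aff 3) * ((f ae : ↥M) : Aff 3)⁻¹
          = ((f t3e : ↥M) : Aff 3)⁻¹ := by simpa using hval
      rw [eq_tr_of_A_eq_one hA1, hm, t3e_zpow_val, conj_tr, tr_inv] at hv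
      have hmat : (Aff.tr ((f ae : ↥M) : Aff 3).a).mat = 1 := rfl
      rw [hmat, Matrix.one_mulVec] at hv
      have h2 := congrFun (congrArg Aff.a hv) 2
      have hL : (m • (Pi.single 2 1 : Eu 3)) 2 = (m : ℝ) := by
        rw [smul_single_vec]; rfl
      have hR : (-(m • (Pi.single 2 1 : Eu 3))) 2 = -(m : ℝ) := by
        show -((m • (Pi.single 2 1 : Eu 3)) 2) = _
        rw [hL]
      rw [show (Aff.tr (m • (Pi.single 2 1 : Eu 3))).a = m • (Pi.single 2 1 : Eu 3)
        from rfl] at h2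
      rw [show (Aff.tr (-(m • (Pi.single 2 1 : Eu 3)))).a = -(m • (Pi.single 2 1 : Eu 3))
        from rfl] at h2
      rw [hL, hR] at h2
      have hm0 : (m : ℝ) = 0 := by linarith
      have : m = 0 := by exact_mod_cast hm0
      rcases hpm with h | h <;> omega
    · exact hA1
  -- integrality data
  have hZ : isZ (((f ae : ↥M) : Aff 3).a - αg.a) := by
    have hmem := (f ae).2
    rw [mem_M_iff] at hmem
    rcases hmem with ⟨hA1, -⟩ | ⟨-, h⟩
    · exfalso; exact Dg_ne_one (by rw [← hA, hA1])
    · exact h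
  obtain ⟨u, hu⟩ := hZ 0
  obtain ⟨v, hv⟩ := hZ 1
  obtain ⟨w, hw⟩ := hZ 2
  have hs0 : αg.a 0 = (1/2 : ℝ) := by rw [αg_a]; simp
  have hs1 : αg.a 1 = 0 := by rw [αg_a]; exact Pi.single_eq_of_ne (by decide) _
  have hs2 : αg.a 2 = 0 := by rw [αg_a]; exact Pi.single_eq_of_ne (by decide) _
  have ha0 : ((f ae : ↥M) : Aff 3).a 0 = (u : ℝ) + 1/2 := by
    have := hu
    rw [show (((f ae : ↥M) : Aff 3).a - αg.a) 0
      = ((f ae : ↥M) : Aff 3).a 0 - αg.a 0 from rfl, hs0] at this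
    linarith
  have ha1 : ((f ae : ↥M) : Aff 3).a 1 = (v : ℝ) := by
    have := hv
    rw [show (((f ae : ↥M) : Aff 3).a - αg.a) 1
      = ((f ae : ↥M) : Aff 3).a 1 - αg.a 1 from rfl, hs1] at this
    linarith
  have ha2 : ((f ae : ↥M) : Aff 3).a 2 = (w : ℝ) := by
    have := hw
    rw [show (((f ae : ↥M) : Aff 3).a - αg.a) 2
      = ((f ae : ↥M) : Aff 3).a 2 - αg.a 2 from rfl, hs2] at this
    linarith
  refine ⟨u, v, w, hA, ?_, ?_, ?_, ?_⟩
  · funext i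
    fin_cases i
    · exact ha0
    · exact ha1
    · exact ha2
  · rw [εf, ha2, Int.floor_intCast]
  · -- square relation, coordinate 0
    have hsq : f ae * f ae = f t1e := by rw [← _root_.map_mul, ae_sq]
    have hval := congrArg Subtype.val hsq
    have hmul : (((f ae * f ae : ↥M)) : Aff 3).a 0
        = ((f ae : ↥M) : Aff 3).a 0 + ((f ae : ↥M) : Aff 3).a 0 := by
      show (((f ae : ↥M) : Aff 3) * ((f ae : ↥M) : Aff 3)).a 0 = _
      rw [Aff.mul_a]
      show _ + ((f ae : ↥M) : Aff 3).mat.mulVec ((f ae : ↥M) : Aff 3).a 0 = _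
      have hmm : ((f ae : ↥M) : Aff 3).mat = (Dg : Matrix (Fin 3) (Fin 3) ℝ) := by
        show (((f ae : ↥M) : Aff 3).A : Matrix (Fin 3) (Fin 3) ℝ) = _; rw [hA]
      rw [hmm, Dg_mulVec]
      norm_num
    have h0 := congrFun (congrArg Aff.a hval) 0
    rw [show ((f t1e : ↥M) : Aff 3).a 0 = ((Cf f 0 0 : ℤ) : ℝ) by
      rw [val_ft1]; rfl] at h0
    have : ((f ae * f ae : ↥M) : Aff 3).a 0 = ((Cf f 0 0 : ℤ) : ℝ) := h0
    rw [hmul, ha0] at this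
    have hcast : ((2 * u + 1 : ℤ) : ℝ) = ((Cf f 0 0 : ℤ) : ℝ) := by push_cast; linarith
    exact_mod_cast hcast.symm
  · -- square relation, coordinate 1
    have hsq : f ae * f ae = f t1e := by rw [← _root_.map_mul, ae_sq]
    have hval := congrArg Subtype.val hsq
    have hmul : (((f ae * f ae : ↥M)) : Aff 3).a 1
        = ((f ae : ↥M) : Aff 3).a 1 + ((f ae : ↥M) : Aff 3).a 1 := by
      show (((f ae : ↥M) : Aff 3) * ((f ae : ↥M) : Aff 3)).a 1 = _
      rw [Aff.mul_a]
      show _ + ((f ae : ↥M) : Aff 3).mat.mulVec ((f ae : ↥M) : Aff 3).a 1 = _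
      have hmm : ((f ae : ↥M) : Aff 3).mat = (Dg : Matrix (Fin 3) (Fin 3) ℝ) := by
        show (((f ae : ↥M) : Aff 3).A : Matrix (Fin 3) (Fin 3) ℝ) = _; rw [hA]
      rw [hmm, Dg_mulVec]
      norm_num
    have h1 := congrFun (congrArg Aff.a hval) 1
    rw [show ((f t1e : ↥M) : Aff 3).a 1 = ((Cf f 1 0 : ℤ) : ℝ) by
      rw [val_ft1]; rfl] at h1
    have : ((f ae * f ae : ↥M) : Aff 3).a 1 = ((Cf f 1 0 : ℤ) : ℝ) := h1
    rw [hmul, ha1] at this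
    have hcast : ((2 * v : ℤ) : ℝ) = ((Cf f 1 0 : ℤ) : ℝ) := by push_cast; linarith
    exact_mod_cast hcast.symm

end N31Aux

namespace N31Aux

open N31 Aff Matrix

lemma val_T (x y z : ℤ) :
    ((t1e ^ x * t2e ^ y * t3e ^ z : ↥M) : Aff 3) = Aff.tr ![(x : ℝ), (y : ℝ), (z : ℝ)] := by
  have h1 : ((t1e ^ x * t2e ^ y * t3e ^ z : ↥M) : Aff 3)
      = (Aff.tr (Pi.single 0 1)) ^ x * (Aff.tr (Pi.single 1 1)) ^ y
        * (Aff.tr (Pi.single 2 1)) ^ z := by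
    push_cast [val_zpow]
    rfl
  rw [h1, tr_zpow, tr_zpow, tr_zpow, tr_mul_tr, tr_mul_tr]
  congr 1
  funext i
  fin_cases i <;> simp [Pi.single_apply]

lemma mk_T (x y z : ℤ) {g : ↥M} (hg : (g : Aff 3) = Aff.tr ![(x : ℝ), (y : ℝ), (z : ℝ)]) :
    g = t1e ^ x * t2e ^ y * t3e ^ z := by
  apply Subtype.ext
  rw [hg, val_T]

lemma tr_pow_mul_tr_pow (v w : Eu 3) (x y : ℤ) :
    (Aff.tr v) ^ x * (Aff.tr w) ^ y = Aff.tr (x • v + y • w) := by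
  rw [tr_zpow, tr_zpow, tr_mul_tr]

lemma image_T (f : MulAut ↥M) (x y z : ℤ) :
    ((f (t1e ^ x * t2e ^ y * t3e ^ z) : ↥M) : Aff 3)
      = Aff.tr ![((x * Cf f 0 0 + y * Cf f 0 1 : ℤ) : ℝ),
          ((x * Cf f 1 0 + y * Cf f 1 1 : ℤ) : ℝ), ((z * δf f : ℤ) : ℝ)] := by
  have h1 : f (t1e ^ x * t2e ^ y * t3e ^ z) = (f t1e) ^ x * (f t2e) ^ y * (f t3e) ^ z := by
    rw [_root_.map_mul, _root_.map_mul, _root_.map_zpow, _root_.map_zpow, _root_.map_zpow]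
  rw [h1]
  have h2 : ((((f t1e) ^ x * (f t2e) ^ y * (f t3e) ^ z : ↥M)) : Aff 3)
      = ((f t1e : ↥M) : Aff 3) ^ x * ((f t2e : ↥M) : Aff 3) ^ y
        * ((f t3e : ↥M) : Aff 3) ^ z := by
    push_cast [val_zpow]
    rfl
  rw [h2, val_ft1, val_ft2, (val_ft3 f).1, tr_zpow, tr_zpow, tr_zpow, tr_mul_tr, tr_mul_tr]
  congr 1
  funext i
  fin_cases i <;> (simp; try (push_cast; ring))

lemma Cf_mul (f g : MulAut ↥M) : Cf (f * g) = Cf f * Cf g := by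
  have ht1 : (f * g) t1e = f (t1e ^ (Cf g 0 0) * t2e ^ (Cf g 1 0) * t3e ^ (0:ℤ)) := by
    show f (g t1e) = _
    congr 1
    apply mk_T
    rw [val_ft1 g]
    norm_num
  have ht2 : (f * g) t2e = f (t1e ^ (Cf g 0 1) * t2e ^ (Cf g 1 1) * t3e ^ (0:ℤ)) := by
    show f (g t2e) = _
    congr 1
    apply mk_T
    rw [val_ft2 g]
    norm_num
  have e1 := image_T f (Cf g 0 0) (Cf g 1 0) 0
  have e2 := image_T f (Cf g 0 1) (Cf g 1 1) 0
  rw [← ht1] at e1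
  rw [← ht2] at e2
  ext i j
  fin_cases i <;> fin_cases j
  · show Cf (f * g) 0 0 = _
    rw [Cf_00, e1]
    show ⌊((Cf g 0 0 * Cf f 0 0 + Cf g 1 0 * Cf f 0 1 : ℤ) : ℝ)⌋ = _
    rw [Int.floor_intCast, Matrix.mul_apply, Fin.sum_univ_two]
    show Cf g 0 0 * Cf f 0 0 + Cf g 1 0 * Cf f 0 1 = Cf f 0 0 * Cf g 0 0 + Cf f 0 1 * Cf g 1 0
    ring
  · show Cf (f * g) 0 1 = _
    rw [Cf_01, e2]
    show ⌊((Cf g 0 1 * Cf f 0 0 + Cf g 1 1 * Cf f 0 1 : ℤ) : ℝ)⌋ = _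
    rw [Int.floor_intCast, Matrix.mul_apply, Fin.sum_univ_two]
    show Cf g 0 1 * Cf f 0 0 + Cf g 1 1 * Cf f 0 1 = Cf f 0 0 * Cf g 0 1 + Cf f 0 1 * Cf g 1 1
    ring
  · show Cf (f * g) 1 0 = _
    rw [Cf_10, e1]
    show ⌊((Cf g 0 0 * Cf f 1 0 + Cf g 1 0 * Cf f 1 1 : ℤ) : ℝ)⌋ = _
    rw [Int.floor_intCast, Matrix.mul_apply, Fin.sum_univ_two]
    show Cf g 0 0 * Cf f 1 0 + Cf g 1 0 * Cf f 1 1 = Cf f 1 0 * Cf g 0 0 + Cf f 1 1 * Cf g 1 0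
    ring
  · show Cf (f * g) 1 1 = _
    rw [Cf_11, e2]
    show ⌊((Cf g 0 1 * Cf f 1 0 + Cf g 1 1 * Cf f 1 1 : ℤ) : ℝ)⌋ = _
    rw [Int.floor_intCast, Matrix.mul_apply, Fin.sum_univ_two]
    show Cf g 0 1 * Cf f 1 0 + Cf g 1 1 * Cf f 1 1 = Cf f 1 0 * Cf g 0 1 + Cf f 1 1 * Cf g 1 1
    ring

lemma Cf_one : Cf (1 : MulAut ↥M) = 1 := by
  ext i j
  fin_cases i <;> fin_cases j
  · show Cf 1 0 0 = _
    rw [Cf_00]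
    show ⌊(Pi.single 0 1 : Eu 3) 0⌋ = _
    norm_num
  · show Cf 1 0 1 = _
    rw [Cf_01]
    show ⌊(Pi.single 1 1 : Eu 3) 0⌋ = _
    rw [Pi.single_eq_of_ne (by decide)]
    norm_num
  · show Cf 1 1 0 = _
    rw [Cf_10]
    show ⌊(Pi.single 0 1 : Eu 3) 1⌋ = _
    rw [Pi.single_eq_of_ne (by decide)]
    norm_num
  · show Cf 1 1 1 = _
    rw [Cf_11]
    show ⌊(Pi.single 1 1 : Eu 3) 1⌋ = _
    norm_num

lemma εf_one : εf (1 : MulAut ↥M) = 0 := by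
  rw [εf]
  show ((⌊αg.a 2⌋ : ℤ) : ZMod 2) = 0
  rw [αg_a, Pi.single_eq_of_ne (by decide)]
  norm_num

lemma εf_mul (f g : MulAut ↥M) : εf (f * g) = εf f + εf g := by
  obtain ⟨u, v, w, hA, ha, hε, -, -⟩ := fae_spec g
  obtain ⟨uf, vf, wf, hAf, haf, hεf, -, -⟩ := fae_spec f
  -- g ae = T(u,v,w) * ae
  have hgae : g ae = (t1e ^ u * t2e ^ v * t3e ^ w) * ae := by
    apply Subtype.ext
    show ((g ae : ↥M) : Aff 3) = ((t1e ^ u * t2e ^ v * t3e ^ w : ↥M) : Aff 3) * αg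
    rw [val_T]
    refine Aff.ext ?_ ?_
    · show ((g ae : ↥M) : Aff 3).a
        = (![(u:ℝ), v, w] : Eu 3) + (Aff.tr ![(u:ℝ), v, w]).mat.mulVec αg.a
      have hmm : (Aff.tr ![(u:ℝ), v, w]).mat = 1 := rfl
      rw [hmm, Matrix.one_mulVec, ha]
      funext i
      fin_cases i <;> simp [αg_a, Pi.single_apply]
    · show ((g ae : ↥M) : Aff 3).A = (Aff.tr ![(u:ℝ), v, w]).A * αg.A
      rw [hA, tr_A, one_mul]
      rfl
  have hfgae : (f * g) ae = f (t1e ^ u * t2e ^ v * t3e ^ w) * f ae := by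
    show f (g ae) = _
    rw [hgae, _root_.map_mul]
  have hval : ((f * g) ae : Aff 3).a 2 = ((w * δf f : ℤ) : ℝ) + (wf : ℝ) := by
    rw [hfgae]
    show (((f (t1e ^ u * t2e ^ v * t3e ^ w) : ↥M) : Aff 3)
        * ((f ae : ↥M) : Aff 3)).a 2 = _
    rw [Aff.mul_a, image_T]
    show ((w * δf f : ℤ) : ℝ) + (Aff.tr _).mat.mulVec ((f ae : ↥M) : Aff 3).a 2 = _
    have hmm : (Aff.tr ![((u * Cf f 0 0 + v * Cf f 0 1 : ℤ) : ℝ),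
        ((u * Cf f 1 0 + v * Cf f 1 1 : ℤ) : ℝ), ((w * δf f : ℤ) : ℝ)]).mat = 1 := rfl
    rw [hmm, Matrix.one_mulVec, haf]
    rfl
  have hδ := (val_ft3 f).2
  rw [εf, hval]
  have hcast : ((w * δf f : ℤ) : ℝ) + (wf : ℝ) = ((w * δf f + wf : ℤ) : ℝ) := by
    push_cast; ring
  rw [hcast, Int.floor_intCast]
  have hδ2 : ((δf f : ℤ) : ZMod 2) = 1 := by
    rcases hδ with h | h <;> rw [h] <;> decide
  rw [hεf, hε]
  push_cast
  rw [hδ2]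
  ring

end N31Aux

namespace N31Aux

open N31 Aff Matrix

/-- `GL₂(ℤ)` element attached to an automorphism -/
noncomputable def CfUnit (f : MulAut ↥M) : Matrix.GeneralLinearGroup (Fin 2) ℤ :=
  ⟨Cf f, Cf f⁻¹,
    by rw [← Cf_mul, mul_inv_cancel, Cf_one],
    by rw [← Cf_mul, inv_mul_cancel, Cf_one]⟩

lemma CfUnit_val (f : MulAut ↥M) : (CfUnit f : Matrix (Fin 2) (Fin 2) ℤ) = Cf f := rfl

lemma CfUnit_mul (f g : MulAut ↥M) : CfUnit (f * g) = CfUnit f * CfUnit g :=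
  Units.ext (by rw [Units.val_mul, CfUnit_val, CfUnit_val, CfUnit_val, Cf_mul])

lemma Cf_even (f : MulAut ↥M) : (2 : ℤ) ∣ Cf f 1 0 := by
  obtain ⟨u, v, w, -, -, -, -, h⟩ := fae_spec f
  exact ⟨v, h⟩

/-- generator induction for subgroups of `↥M` -/
lemma M_gen_induction (K : Subgroup ↥M)
    (h1 : t1e ∈ K) (h2 : t2e ∈ K) (h3 : t3e ∈ K) (h4 : ae ∈ K) : ∀ x : ↥M, x ∈ K := by
  intro x
  have htop := Subgroup.closure_preimage_eq_top
    ({Aff.tr (Pi.single 0 1), Aff.tr (Pi.single 1 1), Aff.tr (Pi.single 2 1), αg}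
      : Set (Aff 3))
  have hx : x ∈ (⊤ : Subgroup ↥M) := trivial
  replace hx := (Subgroup.eq_top_iff' _).mp htop x
  revert hx
  refine fun hx => (Subgroup.closure_le K).mpr ?_ hx
  rintro y hy
  rcases hy with h | h | h | h
  · have : y = t1e := Subtype.ext h
    rw [this]; exact h1
  · have : y = t2e := Subtype.ext h
    rw [this]; exact h2
  · have : y = t3e := Subtype.ext h
    rw [this]; exact h3
  · have : y = ae := Subtype.ext h
    rw [this]; exact h4

/-- automorphisms agreeing on the generators are equal -/
lemma mulAut_ext {f g : MulAut ↥M} (h1 : f t1e = g t1e) (h2 : f t2e = g t2e)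
    (h3 : f t3e = g t3e) (h4 : f ae = g ae) : f = g := by
  have key : ∀ x : ↥M, f x = g x := by
    apply M_gen_induction
      { carrier := {x : ↥M | f x = g x}
        one_mem' := by simp
        mul_mem' := by
          intro a b ha hb
          show f (a * b) = g (a * b)
          rw [_root_.map_mul, _root_.map_mul, ha, hb]
        inv_mem' := by
          intro a ha
          show f a⁻¹ = g a⁻¹
          rw [_root_.map_inv, _root_.map_inv, ha] } h1 h2 h3 h4
  exact MulEquiv.ext key

end N31Aux

namespace N31Aux

open N31 Aff Matrix

/-- the invariants, as a homomorphism (not yet into `H`) -/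
noncomputable def Φ₀ : MulAut ↥M →* Multiplicative (ZMod 2) × (Matrix (Fin 2) (Fin 2) ℤ)ˣ :=
  MonoidHom.mk' (fun f => (Multiplicative.ofAdd (εf f), CfUnit f))
    (fun f g => by
      refine Prod.ext ?_ ?_
      · show Multiplicative.ofAdd (εf (f * g)) = _
        rw [εf_mul]
        rfl
      · show CfUnit (f * g) = _
        rw [CfUnit_mul]
        rfl)

lemma Φ₀_apply (f : MulAut ↥M) :
    Φ₀ f = (Multiplicative.ofAdd (εf f), CfUnit f) := rfl

lemma conj_val (m x : ↥M) :
    (((MulAut.conj m) x : ↥M) : Aff 3) = (m : Aff 3) * (x : Aff 3) * (m : Aff 3)⁻¹ := rfl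

lemma Cf_of_fixes {f : MulAut ↥M} (h1 : f t1e = t1e) (h2 : f t2e = t2e) : Cf f = 1 := by
  ext i j
  fin_cases i <;> fin_cases j
  · show Cf f 0 0 = _
    rw [Cf_00, h1]
    show ⌊(Pi.single 0 1 : Eu 3) 0⌋ = _
    norm_num
  · show Cf f 0 1 = _
    rw [Cf_01, h2]
    show ⌊(Pi.single 1 1 : Eu 3) 0⌋ = _
    rw [Pi.single_eq_of_ne (by decide)]
    norm_num
  · show Cf f 1 0 = _
    rw [Cf_10, h1]
    show ⌊(Pi.single 0 1 : Eu 3) 1⌋ = _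
    rw [Pi.single_eq_of_ne (by decide)]
    norm_num
  · show Cf f 1 1 = _
    rw [Cf_11, h2]
    show ⌊(Pi.single 1 1 : Eu 3) 1⌋ = _
    norm_num

lemma εf_of_a2 {f : MulAut ↥M} {z : ℤ} (h : ((f ae : ↥M) : Aff 3).a 2 = (z : ℝ))
    (hz : (2:ℤ) ∣ z) : εf f = 0 := by
  rw [εf, h, Int.floor_intCast]
  exact (ZMod.intCast_zmod_eq_zero_iff_dvd z 2).mpr (by exact_mod_cast hz)

/-- conjugation of translations by translations is trivial -/
lemma conj_tr_by_tr {v w : Eu 3} : Aff.tr v * Aff.tr w * (Aff.tr v)⁻¹ = Aff.tr w := by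
  rw [conj_tr]
  congr 1
  show (1 : Matrix (Fin 3) (Fin 3) ℝ).mulVec w = w
  rw [Matrix.one_mulVec]

lemma conj_by_tr_αg {v : Eu 3} :
    Aff.tr v * αg * (Aff.tr v)⁻¹
      = ⟨v + αg.a - (Dg : Matrix (Fin 3) (Fin 3) ℝ).mulVec v, αg.A⟩ := by
  rw [conj_eq]
  have hA : (Aff.tr v).A * αg.A * (Aff.tr v).A⁻¹ = αg.A := by
    rw [tr_A]; group
  refine Aff.ext ?_ hA
  show (Aff.tr v).a + (Aff.tr v).mat.mulVec αg.a - _ = _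
  rw [hA]
  show v + (1 : Matrix (Fin 3) (Fin 3) ℝ).mulVec αg.a
      - (Dg : Matrix (Fin 3) (Fin 3) ℝ).mulVec v = _
  rw [Matrix.one_mulVec]

/-- conjugation by a D-type element ⟨b, αg.A⟩ -/
lemma conj_by_D_tr {b : Eu 3} (w : Eu 3) :
    (⟨b, αg.A⟩ : Aff 3) * Aff.tr w * (⟨b, αg.A⟩ : Aff 3)⁻¹
      = Aff.tr ((Dg : Matrix (Fin 3) (Fin 3) ℝ).mulVec w) := by
  rw [conj_tr]
  rfl

lemma conj_by_D_αg {b : Eu 3} :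
    (⟨b, αg.A⟩ : Aff 3) * αg * (⟨b, αg.A⟩ : Aff 3)⁻¹
      = ⟨b + (Dg : Matrix (Fin 3) (Fin 3) ℝ).mulVec αg.a
          - (Dg : Matrix (Fin 3) (Fin 3) ℝ).mulVec b, αg.A⟩ := by
  rw [conj_eq]
  have hA : (⟨b, αg.A⟩ : Aff 3).A * αg.A * (⟨b, αg.A⟩ : Aff 3).A⁻¹ = αg.A := by
    show αg.A * αg.A * (αg.A)⁻¹ = αg.A
    group
  refine Aff.ext ?_ hA
  show (⟨b, αg.A⟩ : Aff 3).a + (⟨b, αg.A⟩ : Aff 3).mat.mulVec αg.a - _ = _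
  rw [hA]
  rfl

/-- inner automorphisms have trivial invariants -/
lemma inn_le_ker : Inn ↥M ≤ Φ₀.ker := by
  rintro f ⟨x, rfl⟩
  show MulAut.conj x ∈ Φ₀.ker
  have hx : x ∈ (Φ₀.comp (MulAut.conj : ↥M →* MulAut ↥M)).ker := by
    apply M_gen_induction ((Φ₀.comp (MulAut.conj : ↥M →* MulAut ↥M)).ker)
    -- conj t1e
    · have h1 : (MulAut.conj t1e) t1e = t1e := by
        apply Subtype.ext; rw [conj_val]; exact conj_tr_by_tr
      have h2 : (MulAut.conj t1e) t2e = t2e := by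
        apply Subtype.ext; rw [conj_val]; exact conj_tr_by_tr
      have hα : ((MulAut.conj t1e) ae : Aff 3).a 2 = ((0:ℤ) : ℝ) := by
        rw [conj_val]
        show (Aff.tr (Pi.single 0 1) * αg * (Aff.tr (Pi.single 0 1))⁻¹).a 2 = _
        rw [conj_by_tr_αg]
        show (Pi.single 0 1 : Eu 3) 2 + αg.a 2
            - (Dg : Matrix (Fin 3) (Fin 3) ℝ).mulVec (Pi.single 0 1) 2 = _
        rw [Dg_mulVec, αg_a]
        simp [Pi.single_apply]
      show Φ₀ (MulAut.conj t1e) = 1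
      rw [Φ₀_apply]
      refine Prod.ext ?_ ?_
      · show Multiplicative.ofAdd (εf (MulAut.conj t1e)) = 1
        rw [εf_of_a2 hα (by norm_num)]
        rfl
      · exact Units.ext (by rw [CfUnit_val, Cf_of_fixes h1 h2]; rfl)
    -- conj t2e
    · have h1 : (MulAut.conj t2e) t1e = t1e := by
        apply Subtype.ext; rw [conj_val]; exact conj_tr_by_tr
      have h2 : (MulAut.conj t2e) t2e = t2e := by
        apply Subtype.ext; rw [conj_val]; exact conj_tr_by_tr
      have hα : ((MulAut.conj t2e) ae : Aff 3).a 2 = ((0:ℤ) : ℝ) := by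
        rw [conj_val]
        show (Aff.tr (Pi.single 1 1) * αg * (Aff.tr (Pi.single 1 1))⁻¹).a 2 = _
        rw [conj_by_tr_αg]
        show (Pi.single 1 1 : Eu 3) 2 + αg.a 2
            - (Dg : Matrix (Fin 3) (Fin 3) ℝ).mulVec (Pi.single 1 1) 2 = _
        rw [Dg_mulVec, αg_a]
        simp [Pi.single_apply]
      show Φ₀ (MulAut.conj t2e) = 1
      rw [Φ₀_apply]
      refine Prod.ext ?_ ?_
      · show Multiplicative.ofAdd (εf (MulAut.conj t2e)) = 1
        rw [εf_of_a2 hα (by norm_num)]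
        rfl
      · exact Units.ext (by rw [CfUnit_val, Cf_of_fixes h1 h2]; rfl)
    -- conj t3e
    · have h1 : (MulAut.conj t3e) t1e = t1e := by
        apply Subtype.ext; rw [conj_val]; exact conj_tr_by_tr
      have h2 : (MulAut.conj t3e) t2e = t2e := by
        apply Subtype.ext; rw [conj_val]; exact conj_tr_by_tr
      have hα : ((MulAut.conj t3e) ae : Aff 3).a 2 = ((2:ℤ) : ℝ) := by
        rw [conj_val]
        show (Aff.tr (Pi.single 2 1) * αg * (Aff.tr (Pi.single 2 1))⁻¹).a 2 = _
        rw [conj_by_tr_αg]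
        show (Pi.single 2 1 : Eu 3) 2 + αg.a 2
            - (Dg : Matrix (Fin 3) (Fin 3) ℝ).mulVec (Pi.single 2 1) 2 = _
        rw [Dg_mulVec, αg_a]
        simp [Pi.single_apply]
        norm_num
      show Φ₀ (MulAut.conj t3e) = 1
      rw [Φ₀_apply]
      refine Prod.ext ?_ ?_
      · show Multiplicative.ofAdd (εf (MulAut.conj t3e)) = 1
        rw [εf_of_a2 hα (by norm_num)]
        rfl
      · exact Units.ext (by rw [CfUnit_val, Cf_of_fixes h1 h2]; rfl)
    -- conj ae
    · have h1 : (MulAut.conj ae) t1e = t1e := by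
        apply Subtype.ext
        rw [conj_val]
        show αg * Aff.tr (Pi.single 0 1) * αg⁻¹ = Aff.tr (Pi.single 0 1)
        rw [show αg = (⟨αg.a, αg.A⟩ : Aff 3) from rfl, conj_by_D_tr]
        congr 1
        funext i
        rw [Dg_mulVec]
        fin_cases i <;> simp [Pi.single_apply]
      have h2 : (MulAut.conj ae) t2e = t2e := by
        apply Subtype.ext
        rw [conj_val]
        show αg * Aff.tr (Pi.single 1 1) * αg⁻¹ = Aff.tr (Pi.single 1 1)
        rw [show αg = (⟨αg.a, αg.A⟩ : Aff 3) from rfl, conj_by_D_tr]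
        congr 1
        funext i
        rw [Dg_mulVec]
        fin_cases i <;> simp [Pi.single_apply]
      have hae : (MulAut.conj ae) ae = ae := by
        show ae * ae * ae⁻¹ = ae
        group
      have hα : ((MulAut.conj ae) ae : Aff 3).a 2 = ((0:ℤ) : ℝ) := by
        rw [hae]
        show αg.a 2 = _
        rw [αg_a, Pi.single_eq_of_ne (by decide)]
        norm_num
      show Φ₀ (MulAut.conj ae) = 1
      rw [Φ₀_apply]
      refine Prod.ext ?_ ?_
      · show Multiplicative.ofAdd (εf (MulAut.conj ae)) = 1
        rw [εf_of_a2 hα (by norm_num)]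
        rfl
      · exact Units.ext (by rw [CfUnit_val, Cf_of_fixes h1 h2]; rfl)
  exact hx

end N31Aux

namespace N31Aux

open N31 Aff Matrix

lemma ker_le_inn : Φ₀.ker ≤ Inn ↥M := by
  intro f hf
  have hf' : Φ₀ f = 1 := hf
  rw [Φ₀_apply] at hf'
  have hε : εf f = 0 := by
    have := congrArg Prod.fst hf'
    simpa using this
  have hC : Cf f = 1 := by
    have := congrArg (fun p : Multiplicative (ZMod 2) × (Matrix (Fin 2) (Fin 2) ℤ)ˣ
      => (p.2 : Matrix (Fin 2) (Fin 2) ℤ)) hf'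
    simpa [CfUnit_val] using this
  have e00 : Cf f 0 0 = 1 := by rw [hC]; rfl
  have e01 : Cf f 0 1 = 0 := by rw [hC]; rfl
  have e10 : Cf f 1 0 = 0 := by rw [hC]; rfl
  have e11 : Cf f 1 1 = 1 := by rw [hC]; rfl
  have ft1 : f t1e = t1e := by
    apply Subtype.ext
    rw [val_ft1, e00, e10]
    show Aff.tr _ = Aff.tr (Pi.single 0 1)
    congr 1
    funext i
    fin_cases i <;> simp [Pi.single_apply]
  have ft2 : f t2e = t2e := by
    apply Subtype.ext
    rw [val_ft2, e01, e11]
    show Aff.tr _ = Aff.tr (Pi.single 1 1)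
    congr 1
    funext i
    fin_cases i <;> simp [Pi.single_apply]
  have ft3 : f t3e = t3e ^ (δf f) := by
    apply Subtype.ext
    rw [(val_ft3 f).1, t3e_zpow_val, smul_single_vec]
  have hδ := (val_ft3 f).2
  obtain ⟨u, v, w, hAv, ha, hεw, hu, hv⟩ := fae_spec f
  have hu0 : u = 0 := by omega
  have hv0 : v = 0 := by omega
  have hw : (2:ℤ) ∣ w := by
    rw [hεw] at hε
    exact_mod_cast (ZMod.intCast_zmod_eq_zero_iff_dvd w 2).mp hε
  obtain ⟨k, hk⟩ := hw
  have haev : ((f ae : ↥M) : Aff 3).a = ![(1/2 : ℝ), 0, ((2*k : ℤ) : ℝ)] := by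
    rw [ha, hu0, hv0, hk]
    funext i
    fin_cases i <;> push_cast <;> norm_num
  rcases hδ with hδ1 | hδ1
  · -- δ = 1 : f is conjugation by t3^k
    refine ⟨t3e ^ k, ?_⟩
    apply mulAut_ext
    · apply Subtype.ext
      rw [conj_val, ft1, t3e_zpow_val]
      exact conj_tr_by_tr
    · apply Subtype.ext
      rw [conj_val, ft2, t3e_zpow_val]
      exact conj_tr_by_tr
    · apply Subtype.ext
      rw [conj_val, ft3, hδ1, t3e_zpow_val, t3e_zpow_val]
      rw [show ((1:ℤ) • (Pi.single 2 1 : Eu 3)) = Pi.single 2 1 by rw [one_smul]]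
      exact conj_tr_by_tr
    · apply Subtype.ext
      rw [conj_val, t3e_zpow_val]
      show Aff.tr (k • (Pi.single 2 1 : Eu 3)) * αg * (Aff.tr (k • (Pi.single 2 1 : Eu 3)))⁻¹
          = ((f ae : ↥M) : Aff 3)
      rw [conj_by_tr_αg]
      refine Aff.ext ?_ ?_
      · rw [haev]
        show k • (Pi.single 2 1 : Eu 3) + αg.a
            - (Dg : Matrix (Fin 3) (Fin 3) ℝ).mulVec (k • (Pi.single 2 1 : Eu 3)) = _
        funext i
        have hD := Dg_mulVec (k • (Pi.single 2 1 : Eu 3)) i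
        fin_cases i <;>
          · show k • (Pi.single 2 1 : Eu 3) _ + αg.a _
              - (Dg : Matrix (Fin 3) (Fin 3) ℝ).mulVec (k • (Pi.single 2 1 : Eu 3)) _ = _
            rw [hD, αg_a]
            simp [Pi.single_apply]
            try push_cast
            try ring
      · exact hAv.symm
  · -- δ = -1 : f is conjugation by t3^k * ae
    refine ⟨t3e ^ k * ae, ?_⟩
    have hmv : ((t3e ^ k * ae : ↥M) : Aff 3) = ⟨k • (Pi.single 2 1 : Eu 3) + αg.a, αg.A⟩ := by
      show ((t3e ^ k : ↥M) : Aff 3) * αg = _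
      rw [t3e_zpow_val]
      refine Aff.ext ?_ ?_
      · show k • (Pi.single 2 1 : Eu 3)
            + (Aff.tr (k • (Pi.single 2 1 : Eu 3))).mat.mulVec αg.a = _
        have : (Aff.tr (k • (Pi.single 2 1 : Eu 3))).mat = 1 := rfl
        rw [this, Matrix.one_mulVec]
      · show (1 : Matrix.GeneralLinearGroup (Fin 3) ℝ) * αg.A = αg.A
        rw [one_mul]
    apply mulAut_ext
    · apply Subtype.ext
      rw [conj_val, ft1, hmv,
        show ((t1e : ↥M) : Aff 3) = Aff.tr (Pi.single 0 1 : Eu 3) from rfl, conj_by_D_tr]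
      show Aff.tr _ = Aff.tr (Pi.single 0 1)
      congr 1
      funext i
      rw [Dg_mulVec]
      fin_cases i <;> simp [Pi.single_apply]
    · apply Subtype.ext
      rw [conj_val, ft2, hmv,
        show ((t2e : ↥M) : Aff 3) = Aff.tr (Pi.single 1 1 : Eu 3) from rfl, conj_by_D_tr]
      show Aff.tr _ = Aff.tr (Pi.single 1 1)
      congr 1
      funext i
      rw [Dg_mulVec]
      fin_cases i <;> simp [Pi.single_apply]
    · apply Subtype.ext
      rw [conj_val, ft3, hδ1, hmv, t3e_zpow_val,
        show ((t3e : ↥M) : Aff 3) = Aff.tr (Pi.single 2 1 : Eu 3) from rfl, conj_by_D_tr]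
      show Aff.tr _ = Aff.tr _
      congr 1
      funext i
      rw [Dg_mulVec]
      fin_cases i <;> simp [Pi.single_apply]
    · apply Subtype.ext
      rw [conj_val, hmv, show ((ae : ↥M) : Aff 3) = αg from rfl, conj_by_D_αg]
      refine Aff.ext ?_ hAv.symm
      rw [haev, Dg_mulVec_s]
      show k • (Pi.single 2 1 : Eu 3) + αg.a + αg.a
          - (Dg : Matrix (Fin 3) (Fin 3) ℝ).mulVec (k • (Pi.single 2 1 : Eu 3) + αg.a) = _
      funext i
      have hD := Dg_mulVec (k • (Pi.single 2 1 : Eu 3) + αg.a) i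
      fin_cases i <;>
        · show k • (Pi.single 2 1 : Eu 3) _ + αg.a _ + αg.a _
            - (Dg : Matrix (Fin 3) (Fin 3) ℝ).mulVec (k • (Pi.single 2 1 : Eu 3) + αg.a) _ = _
          rw [hD]
          show _ - _ * (k • (Pi.single 2 1 : Eu 3) _ + αg.a _) = _
          rw [αg_a]
          simp [Pi.single_apply]
          try push_cast
          try ring

lemma ker_eq_inn : Φ₀.ker = Inn ↥M := le_antisymm ker_le_inn inn_le_ker

end N31Aux

namespace N31Aux

open N31 Aff Matrix

/-- the automorphism of `M` induced by a normalizer element -/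
noncomputable def conjAut (ψ : Aff 3) (hψ : ψ ∈ Subgroup.normalizer (M : Set (Aff 3))) : MulAut ↥M where
  toFun m := ⟨ψ * m * ψ⁻¹, (Subgroup.mem_normalizer_iff.mp hψ (m : Aff 3)).mp m.2⟩
  invFun m := ⟨ψ⁻¹ * m * ψ, by
    apply (Subgroup.mem_normalizer_iff.mp hψ (ψ⁻¹ * (m : Aff 3) * ψ)).mpr
    have : ψ * (ψ⁻¹ * (m : Aff 3) * ψ) * ψ⁻¹ = (m : Aff 3) := by group
    rw [this]
    exact m.2⟩
  left_inv m := Subtype.ext (by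
    show ψ⁻¹ * (ψ * (m : Aff 3) * ψ⁻¹) * ψ = (m : Aff 3)
    group)
  right_inv m := Subtype.ext (by
    show ψ * (ψ⁻¹ * (m : Aff 3) * ψ) * ψ⁻¹ = (m : Aff 3)
    group)
  map_mul' m n := Subtype.ext (by
    show ψ * ((m : Aff 3) * (n : Aff 3)) * ψ⁻¹
        = (ψ * (m : Aff 3) * ψ⁻¹) * (ψ * (n : Aff 3) * ψ⁻¹)
    group)

lemma conjAut_spec (ψ : Aff 3) (hψ : ψ ∈ Subgroup.normalizer (M : Set (Aff 3))) (m : ↥M) :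
    ((conjAut ψ hψ m : ↥M) : Aff 3) = ψ * (m : Aff 3) * ψ⁻¹ := rfl

/-- invariants of a conjugation automorphism -/
lemma conj_invariants (ψ : Aff 3) (f : MulAut ↥M)
    (hconj : ∀ m : ↥M, ((f m : ↥M) : Aff 3) = ψ * (m : Aff 3) * ψ⁻¹)
    (C : Matrix (Fin 2) (Fin 2) ℤ) (δ : ℝ)
    (hmat : Aff.mat ψ = blockMat (C.map (fun z : ℤ => (z : ℝ))) δ) :
    Cf f = C ∧ (∀ z : ℤ, 2 * ψ.a 2 = (z : ℝ) → εf f = ((z : ℤ) : ZMod 2)) := by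
  have hBD : ψ.mat * (Dg : Matrix (Fin 3) (Fin 3) ℝ)
      = (Dg : Matrix (Fin 3) (Fin 3) ℝ) * ψ.mat := by
    rw [hmat]; exact blockMat_comm_Dg _ _
  have hADA : ψ.A * Dg * ψ.A⁻¹ = Dg := conj_A_D hBD
  have hval1 : ((f t1e : ↥M) : Aff 3) = Aff.tr (ψ.mat.mulVec (Pi.single 0 1)) := by
    rw [hconj t1e]
    exact conj_tr ψ _
  have hval2 : ((f t2e : ↥M) : Aff 3) = Aff.tr (ψ.mat.mulVec (Pi.single 1 1)) := by
    rw [hconj t2e]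
    exact conj_tr ψ _
  constructor
  · ext i j
    fin_cases i <;> fin_cases j
    · show Cf f 0 0 = C 0 0
      rw [Cf_00, hval1]
      show ⌊ψ.mat.mulVec (Pi.single 0 1) 0⌋ = _
      rw [mulVec_single_entry, hmat]
      show ⌊((C 0 0 : ℤ) : ℝ)⌋ = _
      exact Int.floor_intCast _
    · show Cf f 0 1 = C 0 1
      rw [Cf_01, hval2]
      show ⌊ψ.mat.mulVec (Pi.single 1 1) 0⌋ = _
      rw [mulVec_single_entry, hmat]
      show ⌊((C 0 1 : ℤ) : ℝ)⌋ = _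
      exact Int.floor_intCast _
    · show Cf f 1 0 = C 1 0
      rw [Cf_10, hval1]
      show ⌊ψ.mat.mulVec (Pi.single 0 1) 1⌋ = _
      rw [mulVec_single_entry, hmat]
      show ⌊((C 1 0 : ℤ) : ℝ)⌋ = _
      exact Int.floor_intCast _
    · show Cf f 1 1 = C 1 1
      rw [Cf_11, hval2]
      show ⌊ψ.mat.mulVec (Pi.single 1 1) 1⌋ = _
      rw [mulVec_single_entry, hmat]
      show ⌊((C 1 1 : ℤ) : ℝ)⌋ = _
      exact Int.floor_intCast _
  · intro z hz
    have hvalα : ((f ae : ↥M) : Aff 3).a 2 = 2 * ψ.a 2 := by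
      rw [hconj ae]
      show (ψ * αg * ψ⁻¹).a 2 = _
      rw [conj_eq]
      show ψ.a 2 + ψ.mat.mulVec αg.a 2
          - ((ψ.A * αg.A * ψ.A⁻¹ : Matrix.GeneralLinearGroup (Fin 3) ℝ)
            : Matrix (Fin 3) (Fin 3) ℝ).mulVec ψ.a 2 = _
      rw [show ψ.A * αg.A * ψ.A⁻¹ = Dg from hADA, Dg_mulVec]
      have hs2 : ψ.mat.mulVec αg.a 2 = ψ.mat 2 0 * (1/2 : ℝ) := by
        rw [αg_a, Matrix.mulVec_single]
        rfl
      rw [hs2, hmat, blockMat_apply_20]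
      show ψ.a 2 + (0:ℝ) * (1/2) - (-1) * ψ.a 2 = 2 * ψ.a 2
      ring
    rw [εf, hvalα, hz, Int.floor_intCast]

end N31Aux

namespace N31Aux

open N31 Aff Matrix

lemma units_int_mul_inv (Cu : (Matrix (Fin 2) (Fin 2) ℤ)ˣ) :
    (Cu : Matrix (Fin 2) (Fin 2) ℤ) * ((Cu⁻¹ : (Matrix (Fin 2) (Fin 2) ℤ)ˣ)
      : Matrix (Fin 2) (Fin 2) ℤ) = 1 := by
  rw [← Units.val_mul, mul_inv_cancel, Units.val_one]

lemma units_int_inv_mul (Cu : (Matrix (Fin 2) (Fin 2) ℤ)ˣ) :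
    ((Cu⁻¹ : (Matrix (Fin 2) (Fin 2) ℤ)ˣ) : Matrix (Fin 2) (Fin 2) ℤ)
      * (Cu : Matrix (Fin 2) (Fin 2) ℤ) = 1 := by
  rw [← Units.val_mul, inv_mul_cancel, Units.val_one]

/-- a `GL(3,ℝ)` element `diag(C, 1)` from `C ∈ GL(2,ℤ)` -/
noncomputable def glB (Cu : (Matrix (Fin 2) (Fin 2) ℤ)ˣ) :
    Matrix.GeneralLinearGroup (Fin 3) ℝ :=
  ⟨blockMat (((Cu : Matrix (Fin 2) (Fin 2) ℤ)).map (fun z : ℤ => (z : ℝ))) 1,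
   blockMat ((((Cu⁻¹ : (Matrix (Fin 2) (Fin 2) ℤ)ˣ) : Matrix (Fin 2) (Fin 2) ℤ)).map
     (fun z : ℤ => (z : ℝ))) 1,
   by rw [blockMat_mul, ← map_intMul, units_int_mul_inv, map_intOne, one_mul, blockMat_one],
   by rw [blockMat_mul, ← map_intMul, units_int_inv_mul, map_intOne, one_mul, blockMat_one]⟩

lemma exists_conj (c : ℤ) (Cu : (Matrix (Fin 2) (Fin 2) ℤ)ˣ)
    (he : (2:ℤ) ∣ (Cu : Matrix (Fin 2) (Fin 2) ℤ) 1 0) :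
    ∃ f : MulAut ↥M, Cf f = (Cu : Matrix (Fin 2) (Fin 2) ℤ) ∧ εf f = ((c : ℤ) : ZMod 2) := by
  set ψ : Aff 3 := ⟨![0, 0, (c : ℝ)/2], glB Cu⟩ with hψdef
  have hmat : Aff.mat ψ
      = blockMat (((Cu : Matrix (Fin 2) (Fin 2) ℤ)).map (fun z : ℤ => (z : ℝ))) 1 := rfl
  have hdet : IsUnit (Cu : Matrix (Fin 2) (Fin 2) ℤ).det := by
    apply IsUnit.of_mul_eq_one ((Cu⁻¹ : (Matrix (Fin 2) (Fin 2) ℤ)ˣ)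
      : Matrix (Fin 2) (Fin 2) ℤ).det
    rw [← Matrix.det_mul, units_int_mul_inv, Matrix.det_one]
  have hψn : ψ ∈ Subgroup.normalizer (M : Set (Aff 3)) := by
    rw [normalizer_iff]
    refine ⟨⟨c, ?_⟩, (Cu : Matrix (Fin 2) (Fin 2) ℤ), hdet, he, 1, Or.inl rfl, hmat⟩
    show 2 * ((c : ℝ)/2) = (c : ℝ)
    ring
  refine ⟨conjAut ψ hψn, ?_, ?_⟩
  · exact (conj_invariants ψ _ (conjAut_spec ψ hψn) _ 1 hmat).1
  · refine (conj_invariants ψ _ (conjAut_spec ψ hψn) _ 1 hmat).2 c ?_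
    show 2 * ((c : ℝ)/2) = (c : ℝ)
    ring

section withH

variable (H : Subgroup (Matrix.GeneralLinearGroup (Fin 2) ℤ))
variable (hH : ∀ C : Matrix.GeneralLinearGroup (Fin 2) ℤ,
  C ∈ H ↔ (2 : ℤ) ∣ (C : Matrix (Fin 2) (Fin 2) ℤ) 1 0)

/-- the invariants as a homomorphism into `ℤ/2 × H` -/
noncomputable def ΦH : MulAut ↥M →* Multiplicative (ZMod 2) × ↥H :=
  MonoidHom.mk' (fun f => (Multiplicative.ofAdd (εf f),
      ⟨CfUnit f, (hH (CfUnit f)).mpr (by rw [CfUnit_val]; exact Cf_even f)⟩))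
    (fun f g => by
      refine Prod.ext ?_ ?_
      · show Multiplicative.ofAdd (εf (f * g)) = _
        rw [εf_mul]
        rfl
      · apply Subtype.ext
        show CfUnit (f * g) = _
        rw [CfUnit_mul]
        rfl)

lemma ΦH_apply (f : MulAut ↥M) :
    ΦH H hH f = (Multiplicative.ofAdd (εf f),
      ⟨CfUnit f, (hH (CfUnit f)).mpr (by rw [CfUnit_val]; exact Cf_even f)⟩) := rfl

lemma ΦH_ker : Inn ↥M = (ΦH H hH).ker := by
  rw [← ker_eq_inn]
  ext f
  constructor
  · intro hf
    have h1 : Φ₀ f = 1 := hf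
    rw [Φ₀_apply] at h1
    have hε : Multiplicative.ofAdd (εf f) = 1 := by
      have := congrArg Prod.fst h1; simpa using this
    have hU : CfUnit f = 1 := by
      have := congrArg Prod.snd h1; simpa using this
    show ΦH H hH f = 1
    rw [ΦH_apply]
    refine Prod.ext hε (Subtype.ext ?_)
    exact hU
  · intro hf
    have h1 : ΦH H hH f = 1 := hf
    rw [ΦH_apply] at h1
    have hε : Multiplicative.ofAdd (εf f) = 1 := by
      have := congrArg Prod.fst h1; simpa using this
    have hU : CfUnit f = 1 := by
      have := congrArg (fun p : Multiplicative (ZMod 2) × ↥H => (p.2 : _)) h1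
      simpa using this
    show Φ₀ f = 1
    rw [Φ₀_apply]
    exact Prod.ext hε hU

lemma ΦH_surj : Function.Surjective (ΦH H hH) := by
  rintro ⟨u, Cu, hCu⟩
  obtain ⟨f, hCf, hεf⟩ := exists_conj (u.toAdd.val : ℤ) Cu ((hH Cu).mp hCu)
  refine ⟨f, ?_⟩
  rw [ΦH_apply]
  refine Prod.ext ?_ (Subtype.ext (Units.ext ?_))
  · show Multiplicative.ofAdd (εf f) = u
    rw [hεf]
    have : (((u.toAdd.val : ℤ)) : ZMod 2) = u.toAdd := by
      push_cast
      exact ZMod.natCast_rightInverse u.toAdd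
    rw [this]
    exact ofAdd_toAdd u
  · show (CfUnit f : Matrix (Fin 2) (Fin 2) ℤ) = (Cu : Matrix (Fin 2) (Fin 2) ℤ)
    rw [CfUnit_val, hCf]

/-- the outer automorphism group isomorphism -/
noncomputable def θH : Out ↥M ≃* Multiplicative (ZMod 2) × ↥H :=
  (QuotientGroup.quotientMulEquivOfEq (ΦH_ker H hH)).trans
    (QuotientGroup.quotientKerEquivOfSurjective (ΦH H hH) (ΦH_surj H hH))

lemma θH_mk (f : MulAut ↥M) : θH H hH (outMk f) = ΦH H hH f := by
  show (QuotientGroup.quotientKerEquivOfSurjective (ΦH H hH) (ΦH_surj H hH))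
      ((QuotientGroup.quotientMulEquivOfEq (ΦH_ker H hH)) (QuotientGroup.mk f))
      = ΦH H hH f
  rw [QuotientGroup.quotientMulEquivOfEq_mk]
  exact QuotientGroup.kerLift_mk (ΦH H hH) f

end withH

end N31Aux

/-- Lemma 18: for the `N³₁` group `M = ⟨t₁,t₂,t₃, ½e₁ + diag(1,1,−1)⟩`, the normalizer
of `M` in the affinities of `E³` is
`{b + B : 2b₃ ∈ ℤ, B = diag(C, ±1), C ∈ GL(2,ℤ), c₂₁ even}`, and
`Out(M) ≅ ℤ/2ℤ × H` with `H = {C ∈ GL(2,ℤ) : c₂₁ even}`, where the class of (the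
automorphism induced by) `½e₃ + I` maps to the generator of the `ℤ/2ℤ` factor and the
class of `diag(C, ±1)` maps to `C ∈ H`. -/
theorem N31_normalizer_and_out
    (H : Subgroup (Matrix.GeneralLinearGroup (Fin 2) ℤ))
    (hH : ∀ C : Matrix.GeneralLinearGroup (Fin 2) ℤ,
      C ∈ H ↔ (2 : ℤ) ∣ (C : Matrix (Fin 2) (Fin 2) ℤ) 1 0) :
    (∀ φ : Aff 3, φ ∈ Subgroup.normalizer (N31.M : Set (Aff 3)) ↔
      ((∃ z : ℤ, 2 * φ.a 2 = (z : ℝ)) ∧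
        ∃ C : Matrix (Fin 2) (Fin 2) ℤ, IsUnit C.det ∧ (2 : ℤ) ∣ C 1 0 ∧
          ∃ δ : ℝ, (δ = 1 ∨ δ = -1) ∧
            Aff.mat φ = blockMat (C.map (fun z : ℤ => (z : ℝ))) δ)) ∧
    (∃ θ : Out ↥N31.M ≃* Multiplicative (ZMod 2) × ↥H,
      (∀ ψ : Aff 3, ψ ∈ Subgroup.normalizer (N31.M : Set (Aff 3)) → ψ.a = Pi.single 2 (1/2 : ℝ) → ψ.A = 1 →
        ∀ f : MulAut ↥N31.M, (∀ m : ↥N31.M, ((f m : Aff 3)) = ψ * (m : Aff 3) * ψ⁻¹) →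
          θ (outMk f) = (Multiplicative.ofAdd 1, 1)) ∧
      (∀ (C : Matrix.GeneralLinearGroup (Fin 2) ℤ) (hC : C ∈ H) (δ : ℝ),
        (δ = 1 ∨ δ = -1) →
        ∀ ψ : Aff 3, ψ ∈ Subgroup.normalizer (N31.M : Set (Aff 3)) → ψ.a = 0 →
          Aff.mat ψ
            = blockMat (((C : Matrix (Fin 2) (Fin 2) ℤ)).map (fun z : ℤ => (z : ℝ))) δ →
        ∀ f : MulAut ↥N31.M, (∀ m : ↥N31.M, ((f m : Aff 3)) = ψ * (m : Aff 3) * ψ⁻¹) →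
          θ (outMk f) = (1, ⟨C, hC⟩))) := by
  constructor
  · intro φ
    exact N31Aux.normalizer_iff φ
  · refine ⟨N31Aux.θH H hH, ?_, ?_⟩
    · intro ψ hψn hψa hψA f hconf
      rw [N31Aux.θH_mk, N31Aux.ΦH_apply]
      have hmat : Aff.mat ψ
          = blockMat ((1 : Matrix (Fin 2) (Fin 2) ℤ).map (fun z : ℤ => (z : ℝ))) 1 := by
        rw [N31Aux.map_intOne, N31Aux.blockMat_one]
        show (ψ.A : Matrix (Fin 3) (Fin 3) ℝ) = 1
        rw [hψA]
        rfl
      obtain ⟨hC, hε⟩ := N31Aux.conj_invariants ψ f hconf 1 1 hmat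
      have hε1 : N31Aux.εf f = ((1 : ℤ) : ZMod 2) := by
        apply hε 1
        rw [hψa]
        show 2 * (Pi.single 2 (1/2 : ℝ) : Eu 3) 2 = ((1 : ℤ) : ℝ)
        rw [Pi.single_eq_same]
        norm_num
      refine Prod.ext ?_ (Subtype.ext (Units.ext ?_))
      · show Multiplicative.ofAdd (N31Aux.εf f) = Multiplicative.ofAdd 1
        rw [hε1, Int.cast_one]
      · show (N31Aux.CfUnit f : Matrix (Fin 2) (Fin 2) ℤ)
            = (((1 : ↥H) : Matrix.GeneralLinearGroup (Fin 2) ℤ) : Matrix (Fin 2) (Fin 2) ℤ)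
        rw [N31Aux.CfUnit_val, hC]
        rfl
    · intro C hC δ hδ ψ hψn hψa hψmat f hconf
      rw [N31Aux.θH_mk, N31Aux.ΦH_apply]
      obtain ⟨hCf, hε⟩ := N31Aux.conj_invariants ψ f hconf
        (C : Matrix (Fin 2) (Fin 2) ℤ) δ hψmat
      have hε0 : N31Aux.εf f = ((0 : ℤ) : ZMod 2) := by
        apply hε 0
        rw [hψa]
        show 2 * (0 : Eu 3) 2 = ((0 : ℤ) : ℝ)
        norm_num
      refine Prod.ext ?_ (Subtype.ext (Units.ext ?_))
      · show Multiplicative.ofAdd (N31Aux.εf f) = (1 : Multiplicative (ZMod 2))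
        rw [hε0, Int.cast_zero]
        rfl
      · show (N31Aux.CfUnit f : Matrix (Fin 2) (Fin 2) ℤ) = (C : Matrix (Fin 2) (Fin 2) ℤ)
        rw [N31Aux.CfUnit_val, hCf]
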